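/- arXiv:1610.04930 — 6 statements merged into one kernel-verified Lean document; each statement's English description precedes it below -/
import Mathlib

section
/- For every k ∈ ℝ², γ(k) = 0 if and only if k ∈ (K + Λ_h*) ∪ (−K + Λ_h*); equivalently, 1 + exp(i k·v₁) + exp(i k·v₂) = 0 if and only if k = K + m₁k₁ + m₂k₂ or k = −K + m₁k₁ + m₂k₂ for some m₁, m₂ ∈ ℤ. -/
noncomputable section

open scoped Real

/-- The plane `ℝ²` with the Euclidean norm. -/
abbrev V2 : Type := EuclideanSpace ℝ (Fin 2)

/-- The vector `(a, b) ∈ ℝ²`. -/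
def vec (a b : ℝ) : V2 := WithLp.toLp 2 ![a, b]

/-- The dot product on `ℝ²`. -/
def dot (a b : V2) : ℝ := a 0 * b 0 + a 1 * b 1

/-- `v₁ = (√3/2, 1/2)`. -/
def v1 : V2 := vec (Real.sqrt 3 / 2) (1 / 2)

/-- `v₂ = (√3/2, −1/2)`. -/
def v2 : V2 := vec (Real.sqrt 3 / 2) (-(1 / 2))

/-- The lattice point `m₁ v₁ + m₂ v₂` of `Λ_h`. -/
def lat (m : ℤ × ℤ) : V2 := (m.1 : ℝ) • v1 + (m.2 : ℝ) • v2

/-- `k₁ = 2π(1/√3, 1)`. -/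
def dk1 : V2 := vec (2 * π / Real.sqrt 3) (2 * π)

/-- `k₂ = 2π(1/√3, −1)`. -/
def dk2 : V2 := vec (2 * π / Real.sqrt 3) (-(2 * π))

/-- The dual lattice point `m₁ k₁ + m₂ k₂` of `Λ_h*`. -/
def dlat (m : ℤ × ℤ) : V2 := (m.1 : ℝ) • dk1 + (m.2 : ℝ) • dk2

/-- `K = (0, 4π/3)`. -/
def KK : V2 := vec 0 (4 * π / 3)

/-- Clockwise rotation by `2π/3` about the origin (the matrix `R`). -/
def rotR (x : V2) : V2 :=
  vec (-(1/2) * x 0 + (Real.sqrt 3 / 2) * x 1) (-(Real.sqrt 3 / 2) * x 0 - (1/2) * x 1)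

/-- The transpose `Rᵀ`. -/
def rotRT (x : V2) : V2 :=
  vec (-(1/2) * x 0 - (Real.sqrt 3 / 2) * x 1) ((Real.sqrt 3 / 2) * x 0 - (1/2) * x 1)

/-- Clockwise rotation by `π/3` about the origin (the matrix `R₆₀`). -/
def rot60 (x : V2) : V2 :=
  vec ((1/2) * x 0 + (Real.sqrt 3 / 2) * x 1) (-(Real.sqrt 3 / 2) * x 0 + (1/2) * x 1)

/-- `e_{A,1} = (1/√3, 0)`. -/
def eA1 : V2 := vec (1 / Real.sqrt 3) 0

/-- `e_{A,ν} = R^{ν−1} e_{A,1}` for `ν = 1, 2, 3` (indexed by `Fin 3`). -/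
def eA (ν : Fin 3) : V2 := rotR^[(ν : ℕ)] eA1

/-- `e_{B,ν} = −e_{A,ν}`. -/
def eB (ν : Fin 3) : V2 := -eA ν

/-- `e_{I,ν}` for `I ∈ {A, B}` (`true ↦ A`, `false ↦ B`). -/
def eVec (I : Bool) (ν : Fin 3) : V2 := if I then eA ν else eB ν

/-- `γ(k) = Σ_{ν=1}^3 exp(i k·e_{B,ν})`. -/
def gam (k : V2) : ℂ := ∑ ν : Fin 3, Complex.exp (Complex.I * (dot k (eB ν)))

/-- `W_TB(k) = |γ(k)|`. -/
def Wtb (k : V2) : ℝ := ‖gam k‖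

/-- `v_B = (1/√3, 0)`. -/
def vB : V2 := vec (1 / Real.sqrt 3) 0

/-- The hexagon center `x_c = (1/(2√3), −1/2)`. -/
def xc : V2 := vec (1 / (2 * Real.sqrt 3)) (-(1 / 2))

/-- The rotation operator `ℛ[f](x) = f(x_c + Rᵀ(x − x_c))`. -/
def Rop (f : V2 → ℂ) (x : V2) : ℂ := f (xc + rotRT (x - xc))

/-- `τ = exp(2πi/3)`. -/
def tau : ℂ := Complex.exp (2 * (π : ℂ) * Complex.I / 3)

/-- The Euclidean norm of an integer pair. -/
def znorm (m : ℤ × ℤ) : ℝ := Real.sqrt ((m.1 : ℝ) ^ 2 + (m.2 : ℝ) ^ 2)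

/-- `N_bad(w) = {m ∈ ℤ² : |w + m₁v₁ + m₂v₂| = 1/√3}`. -/
def Nbad (w : V2) : Set (ℤ × ℤ) := {m | ‖w + lat m‖ = 1 / Real.sqrt 3}

/-- The `i`-th standard basis vector of `ℝ²`. -/
def basis2 (i : Fin 2) : V2 := EuclideanSpace.single i 1

/-- Partial derivative `∂_i f` of a complex-valued function on `ℝ²`. -/
def pd (i : Fin 2) (f : V2 → ℂ) : V2 → ℂ := fun x => fderiv ℝ f x (basis2 i)

/-- The Laplacian `Δf = ∂₁²f + ∂₂²f` of a complex-valued function on `ℝ²`. -/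
def lap (f : V2 → ℂ) (x : V2) : ℂ :=
  ∑ i : Fin 2, fderiv ℝ (fun y => fderiv ℝ f y (basis2 i)) x (basis2 i)

/-- The radial profile of the fundamental solution of `−Δ + 1` on `ℝ²`:
`𝒦(r) = (2π)⁻¹ e^{−r} ∫₀^∞ e^{−ζ} ζ^{−1/2} (2r + ζ)^{−1/2} dζ`. -/
def Kker (r : ℝ) : ℝ :=
  (2 * π)⁻¹ * Real.exp (-r) *
    ∫ ζ in Set.Ioi (0 : ℝ), Real.exp (-ζ) * ζ ^ (-(1/2 : ℝ)) * (2 * r + ζ) ^ (-(1/2 : ℝ))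

/-!
Since `e_{B,2} = e_{B,1} + v₁` and `e_{B,3} = e_{B,1} + v₂`, `γ(k)` is a unimodular multiple of
`1 + e^{i k·v₁} + e^{i k·v₂}`. Two unit complex numbers `u, w` with `1 + u + w = 0` must be the
primitive cube roots of unity `e^{±2πi/3}` in some order, so `γ(k) = 0` iff
`(k·v₁, k·v₂) ≡ ±(2π/3, −2π/3) (mod 2π)`. As `kᵢ·vⱼ = 2π δᵢⱼ` and `(K·v₁, K·v₂) = (2π/3, −2π/3)`,
these congruences say exactly that `k ∈ ±K + Λ_h*`.
-/

open Complex

lemma exp_I_mul_eq_exp_I_mul_iff (x y : ℝ) :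
    exp (I * x) = exp (I * y) ↔ (x : Real.Angle) = y := by
  rw [exp_eq_exp_iff_exists_int, Real.Angle.angle_eq_iff_two_pi_dvd_sub]
  refine exists_congr fun n => ⟨fun h => ?_, fun h => ?_⟩
  · exact_mod_cast (by linear_combination (-I) * h + (x - y - 2 * π * n) * I_sq :
      (x - y : ℂ) = 2 * π * n)
  · linear_combination I * (by exact_mod_cast h : (x - y : ℂ) = 2 * π * n)

lemma one_add_add_eq_zero_iff_of_norm_eq_one {u w : ℂ} (hu : ‖u‖ = 1) (hw : ‖w‖ = 1) :
    1 + u + w = 0 ↔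
      (u = ⟨-(1 / 2), √3 / 2⟩ ∧ w = ⟨-(1 / 2), -(√3 / 2)⟩) ∨
        (u = ⟨-(1 / 2), -(√3 / 2)⟩ ∧ w = ⟨-(1 / 2), √3 / 2⟩) := by
  have hu2 : u.re ^ 2 + u.im ^ 2 = 1 := by
    rw [← normSq_add_mul_I u.re u.im, re_add_im, normSq_eq_norm_sq, hu, one_pow]
  have hw2 : w.re ^ 2 + w.im ^ 2 = 1 := by
    rw [← normSq_add_mul_I w.re w.im, re_add_im, normSq_eq_norm_sq, hw, one_pow]
  have h3 : √3 ^ 2 = 3 := Real.sq_sqrt (by norm_num)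
  simp only [Complex.ext_iff, add_re, add_im, one_re, one_im, zero_re, zero_im]
  constructor
  · rintro ⟨hre, him⟩
    have hure : u.re = -(1 / 2) := by
      linear_combination (hw2 - hu2 - (w.re - 1 - u.re) * hre - (w.im - u.im) * him) / 2
    have huim : (u.im - √3 / 2) * (u.im + √3 / 2) = 0 := by
      linear_combination hu2 - (u.re - 1 / 2) * hure - h3 / 4
    rcases mul_eq_zero.mp huim with h | h
    · left; refine ⟨⟨hure, ?_⟩, ?_, ?_⟩ <;> linarith
    · right; refine ⟨⟨hure, ?_⟩, ?_, ?_⟩ <;> linarith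
  · rintro (⟨⟨h1, h2⟩, h3, h4⟩ | ⟨⟨h1, h2⟩, h3, h4⟩) <;> constructor <;> linarith

lemma exp_I_mul_two_pi_div_three :
    exp (I * ↑(2 * π / 3)) = ⟨-(1 / 2), √3 / 2⟩ := by
  have h : 2 * π / 3 = π - π / 3 := by ring
  rw [mul_comm, exp_mul_I, ← ofReal_cos, ← ofReal_sin, h, Real.cos_pi_sub, Real.sin_pi_sub,
    Real.cos_pi_div_three, Real.sin_pi_div_three]
  apply Complex.ext <;> simp

lemma exp_I_mul_neg_two_pi_div_three :
    exp (I * ↑(-(2 * π / 3))) = ⟨-(1 / 2), -(√3 / 2)⟩ := by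
  have h : 2 * π / 3 = π - π / 3 := by ring
  rw [mul_comm, exp_mul_I, ← ofReal_cos, ← ofReal_sin, Real.cos_neg, Real.sin_neg, h,
    Real.cos_pi_sub, Real.sin_pi_sub, Real.cos_pi_div_three, Real.sin_pi_div_three]
  apply Complex.ext <;> simp

lemma one_add_exp_add_exp_eq_zero_iff (a b : ℝ) :
    1 + exp (I * a) + exp (I * b) = 0 ↔
      ((a : Real.Angle) = ↑(2 * π / 3) ∧ (b : Real.Angle) = ↑(-(2 * π / 3))) ∨
        ((a : Real.Angle) = ↑(-(2 * π / 3)) ∧ (b : Real.Angle) = ↑(2 * π / 3)) := by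
  rw [one_add_add_eq_zero_iff_of_norm_eq_one (norm_exp_I_mul_ofReal a) (norm_exp_I_mul_ofReal b),
    ← exp_I_mul_two_pi_div_three, ← exp_I_mul_neg_two_pi_div_three]
  simp only [exp_I_mul_eq_exp_I_mul_iff]

@[simp] lemma vec_zero (a b : ℝ) : vec a b 0 = a := rfl

@[simp] lemma vec_one (a b : ℝ) : vec a b 1 = b := rfl

lemma dot_add_left (a b c : V2) : dot (a + b) c = dot a c + dot b c := by
  simp only [dot, PiLp.add_apply]; ring

lemma dot_add_right (a b c : V2) : dot a (b + c) = dot a b + dot a c := by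
  simp only [dot, PiLp.add_apply]; ring

lemma dot_smul_left (r : ℝ) (a c : V2) : dot (r • a) c = r * dot a c := by
  simp only [dot, PiLp.smul_apply, smul_eq_mul]; ring

lemma dot_neg_left (a c : V2) : dot (-a) c = -dot a c := by
  simp only [dot, PiLp.neg_apply]; ring

lemma eq_of_dot_v1_eq_of_dot_v2_eq {k k' : V2} (h₁ : dot k v1 = dot k' v1)
    (h₂ : dot k v2 = dot k' v2) : k = k' := by
  simp only [dot, v1, v2, vec_zero, vec_one] at h₁ h₂
  have e₀ : k 0 = k' 0 :=
    mul_left_cancel₀ (by positivity : √3 ≠ 0) (by linear_combination h₁ + h₂)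
  have e₁ : k 1 = k' 1 := by linear_combination h₁ - h₂
  ext i
  fin_cases i
  exacts [e₀, e₁]

lemma dot_KK_v1 : dot KK v1 = 2 * π / 3 := by
  simp only [dot, KK, v1, vec_zero, vec_one]; ring

lemma dot_KK_v2 : dot KK v2 = -(2 * π / 3) := by
  simp only [dot, KK, v2, vec_zero, vec_one]; ring

lemma dot_dk1_v1 : dot dk1 v1 = 2 * π := by
  simp only [dot, dk1, v1, vec_zero, vec_one]; field_simp; ring

lemma dot_dk1_v2 : dot dk1 v2 = 0 := by
  simp only [dot, dk1, v2, vec_zero, vec_one]; field_simp; ring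

lemma dot_dk2_v1 : dot dk2 v1 = 0 := by
  simp only [dot, dk2, v1, vec_zero, vec_one]; field_simp; ring

lemma dot_dk2_v2 : dot dk2 v2 = 2 * π := by
  simp only [dot, dk2, v2, vec_zero, vec_one]; field_simp; ring

lemma dot_add_dual_v1 (c : V2) (m₁ m₂ : ℤ) :
    dot (c + ((m₁ : ℝ) • dk1 + (m₂ : ℝ) • dk2)) v1 = dot c v1 + 2 * π * m₁ := by
  rw [dot_add_left, dot_add_left, dot_smul_left, dot_smul_left, dot_dk1_v1, dot_dk2_v1]; ring

lemma dot_add_dual_v2 (c : V2) (m₁ m₂ : ℤ) :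
    dot (c + ((m₁ : ℝ) • dk1 + (m₂ : ℝ) • dk2)) v2 = dot c v2 + 2 * π * m₂ := by
  rw [dot_add_left, dot_add_left, dot_smul_left, dot_smul_left, dot_dk1_v2, dot_dk2_v2]; ring

lemma exists_eq_add_dual_iff (k c : V2) :
    (∃ m₁ m₂ : ℤ, k = c + ((m₁ : ℝ) • dk1 + (m₂ : ℝ) • dk2)) ↔
      (dot k v1 : Real.Angle) = dot c v1 ∧ (dot k v2 : Real.Angle) = dot c v2 := by
  simp only [Real.Angle.angle_eq_iff_two_pi_dvd_sub]
  constructor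
  · rintro ⟨m₁, m₂, rfl⟩
    exact ⟨⟨m₁, by rw [dot_add_dual_v1]; ring⟩, ⟨m₂, by rw [dot_add_dual_v2]; ring⟩⟩
  · rintro ⟨⟨m₁, h₁⟩, ⟨m₂, h₂⟩⟩
    exact ⟨m₁, m₂, eq_of_dot_v1_eq_of_dot_v2_eq (by rw [dot_add_dual_v1]; linarith)
      (by rw [dot_add_dual_v2]; linarith)⟩

lemma eB_one : eB 1 = eB 0 + v1 := by
  ext i
  fin_cases i <;> simp [eB, eA, eA1, rotR, v1, vec] <;> field_simp
  norm_num

lemma eB_two : eB 2 = eB 0 + v2 := by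
  ext i
  fin_cases i <;> simp [eB, eA, eA1, rotR, v2, vec] <;> field_simp <;> norm_num

lemma gam_eq_exp_mul (k : V2) :
    gam k = exp (I * dot k (eB 0)) * (1 + exp (I * dot k v1) + exp (I * dot k v2)) := by
  simp only [gam, Fin.sum_univ_three, eB_one, eB_two, dot_add_right, ofReal_add, mul_add, exp_add]
  ring

/-- For `k ∈ ℝ²`, `γ(k) = 0` iff `k ∈ (K + Λ_h*) ∪ (−K + Λ_h*)`;
equivalently `1 + exp(i k·v₁) + exp(i k·v₂) = 0` iff
`k = K + m₁k₁ + m₂k₂` or `k = −K + m₁k₁ + m₂k₂` for some integers `m₁, m₂`. -/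
theorem statement0 (k : V2) :
    (gam k = 0 ↔
      ∃ m₁ m₂ : ℤ, k = KK + ((m₁ : ℝ) • dk1 + (m₂ : ℝ) • dk2) ∨
        k = -KK + ((m₁ : ℝ) • dk1 + (m₂ : ℝ) • dk2)) ∧
    ((1 + Complex.exp (Complex.I * (dot k v1)) + Complex.exp (Complex.I * (dot k v2)) = 0 ↔
      ∃ m₁ m₂ : ℤ, k = KK + ((m₁ : ℝ) • dk1 + (m₂ : ℝ) • dk2) ∨
        k = -KK + ((m₁ : ℝ) • dk1 + (m₂ : ℝ) • dk2))) := by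
  have hzero : 1 + exp (I * dot k v1) + exp (I * dot k v2) = 0 ↔
      ∃ m₁ m₂ : ℤ, k = KK + ((m₁ : ℝ) • dk1 + (m₂ : ℝ) • dk2) ∨
        k = -KK + ((m₁ : ℝ) • dk1 + (m₂ : ℝ) • dk2) := by
    simp only [exists_or]
    rw [one_add_exp_add_exp_eq_zero_iff, exists_eq_add_dual_iff, exists_eq_add_dual_iff,
      dot_neg_left, dot_neg_left, dot_KK_v1, dot_KK_v2, neg_neg]
  have hgam : gam k = 0 ↔ 1 + exp (I * dot k v1) + exp (I * dot k v2) = 0 := by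
    rw [gam_eq_exp_mul, mul_eq_zero, or_iff_right (exp_ne_zero _)]
  exact ⟨hgam.trans hzero, hzero⟩
end
end

section
/- Let V: ℝ² → ℝ be continuous and satisfy V(x_c + Rᵀ(x − x_c)) = V(x) for all x ∈ ℝ². Then: (a) for every twice continuously differentiable f: ℝ² → ℂ, (−Δ + V)(ℛ[f]) = ℛ[(−Δ + V)f] as functions on ℝ² (the commutator of −Δ + V and ℛ vanishes); (b) for any k ∈ ℝ², if f(x + v) = exp(i k·v) f(x) for all x ∈ ℝ² and v ∈ Λ_h, then ℛ[f](x + v) = exp(i (Rk)·v) ℛ[f](x) for all x and v ∈ Λ_h. Consequently, if K⋆ ∈ ℝ² satisfies RK⋆ − K⋆ ∈ Λ_h* and φ is a twice continuously differentiable solution of (−Δ + V)φ = Eφ with φ(x + v) = exp(i K⋆·v) φ(x) for all v ∈ Λ_h, then ℛ[φ] is also a solution of (−Δ + V)ψ = Eψ with ψ(x + v) = exp(i K⋆·v) ψ(x) for all v ∈ Λ_h. -/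
noncomputable section

open scoped Real

/-!
`ℛ` is composition with the rotation by `2π/3` about `x_c`, an affine isometry of `ℝ²`. The
Laplacian is the trace of the Hessian in any orthonormal basis and an affine isometry carries one
orthonormal basis to another, so `Δ` commutes with `ℛ` on `C²` functions, while `V` commutes with
`ℛ` by hypothesis. For the Bloch condition, `Rᵀ` maps `Λ_h` onto itself and is the adjoint of `R`,
so the phase `k·(Rᵀv)` becomes `(Rk)·v`; if moreover `RK⋆ = K⋆ + g` with `g ∈ Λ_h*`, the extra
phase `g·v` lies in `2πℤ`.
-/

open InnerProductSpace Laplacian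

section AffineIsometryInvariance

variable {E F G : Type*} [NormedAddCommGroup E] [InnerProductSpace ℝ E] [FiniteDimensional ℝ E]
  [NormedAddCommGroup F] [InnerProductSpace ℝ F] [FiniteDimensional ℝ F]
  [NormedAddCommGroup G] [NormedSpace ℝ G]

theorem laplacian_comp_linearIsometryEquiv (A : E ≃ₗᵢ[ℝ] F) (f : F → G) (x : E) :
    Δ (f ∘ A) x = Δ f (A x) := by
  let b := stdOrthonormalBasis ℝ E
  have hcomp : iteratedFDeriv ℝ 2 (f ∘ A) x =
      (iteratedFDeriv ℝ 2 f (A x)).compContinuousLinearMap fun _ => (A : E →L[ℝ] F) := by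
    simpa [iteratedFDerivWithin_univ] using
      A.toContinuousLinearEquiv.iteratedFDerivWithin_comp_right f uniqueDiffOn_univ
        (Set.mem_univ _) 2
  simp only [laplacian_eq_iteratedFDeriv_orthonormalBasis _ b,
    laplacian_eq_iteratedFDeriv_orthonormalBasis f (b.map A), hcomp]
  congr 1 with i
  simp only [ContinuousMultilinearMap.compContinuousLinearMap_apply, OrthonormalBasis.map_apply]
  congr 1 with j
  fin_cases j <;> rfl

theorem laplacian_comp_add_right (f : E → G) (a x : E) :
    Δ (fun z => f (z + a)) x = Δ f (x + a) := by
  simp only [laplacian_eq_iteratedFDeriv_stdOrthonormalBasis, iteratedFDeriv_comp_add_right]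

theorem laplacian_comp_affineIsometryEquiv (ρ : E ≃ᵃⁱ[ℝ] F) (f : F → G) (x : E) :
    Δ (f ∘ ρ) x = Δ f (ρ x) := by
  have hρ : f ∘ ρ = (fun w => f (w + ρ 0)) ∘ ρ.linearIsometryEquiv := by
    ext z
    simpa using congrArg f (ρ.map_vadd 0 z)
  rw [hρ, laplacian_comp_linearIsometryEquiv, laplacian_comp_add_right]
  simpa using congrArg (Δ f) (ρ.map_vadd 0 x).symm

end AffineIsometryInvariance

theorem lap_eq_laplacian {f : V2 → ℂ} {x : V2} (hf : ContDiffAt ℝ 2 f x) : lap f x = Δ f x := by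
  have hf' : DifferentiableAt ℝ (fderiv ℝ f) x :=
    (hf.fderiv_right (m := 1) (by norm_num)).differentiableAt (by norm_num)
  rw [laplacian_eq_iteratedFDeriv_orthonormalBasis f (EuclideanSpace.basisFun (Fin 2) ℝ)]
  refine Finset.sum_congr rfl fun i _ => ?_
  rw [fderiv_clm_apply hf' (differentiableAt_const _)]
  simp [iteratedFDeriv_two_apply, basis2]

theorem norm_rotRT (x : V2) : ‖rotRT x‖ = ‖x‖ := by
  have h3 : Real.sqrt 3 ^ 2 = 3 := Real.sq_sqrt (by norm_num)
  simp only [EuclideanSpace.norm_eq, Fin.sum_univ_two, Real.norm_eq_abs, sq_abs, rotRT, vec]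
  congr 1
  simp only [Matrix.cons_val_zero, Matrix.cons_val_one]
  linear_combination (x 0 ^ 2 + x 1 ^ 2) / 4 * h3

def rotRTEquiv : V2 ≃ₗᵢ[ℝ] V2 :=
  LinearIsometry.toLinearIsometryEquiv
    { toFun := rotRT
      map_add' x y := by ext j; fin_cases j <;> simp [rotRT, vec] <;> ring
      map_smul' c x := by ext j; fin_cases j <;> simp [rotRT, vec] <;> ring
      norm_map' := norm_rotRT } rfl

@[simp] theorem rotRTEquiv_apply (x : V2) : rotRTEquiv x = rotRT x := rfl

def rotXc : V2 ≃ᵃⁱ[ℝ] V2 :=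
  (AffineIsometryEquiv.vaddConst ℝ xc).symm.trans
    (rotRTEquiv.toAffineIsometryEquiv.trans (AffineIsometryEquiv.vaddConst ℝ xc))

theorem rotXc_apply (x : V2) : rotXc x = xc + rotRT (x - xc) := by
  simp [rotXc, add_comm]

theorem Rop_eq_comp (f : V2 → ℂ) : Rop f = f ∘ rotXc := by
  ext x; simp [Rop, rotXc_apply]

theorem lap_Rop {f : V2 → ℂ} (hf : ContDiff ℝ 2 f) : lap (Rop f) = Rop (lap f) := by
  ext x
  have hρ : ContDiff ℝ 2 (rotXc : V2 → V2) :=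
    rotXc.toAffineIsometry.toContinuousAffineMap.contDiff
  simp only [Rop_eq_comp, Function.comp_apply]
  rw [lap_eq_laplacian (hf.comp hρ).contDiffAt, lap_eq_laplacian hf.contDiffAt,
    laplacian_comp_affineIsometryEquiv]

theorem rotRT_lat (m : ℤ × ℤ) : rotRT (lat m) = lat (m.2, -m.1 - m.2) := by
  have h3 : Real.sqrt 3 ^ 2 = 3 := Real.sq_sqrt (by norm_num)
  ext j; fin_cases j <;>
    simp only [rotRT, lat, v1, v2, vec, PiLp.add_apply, PiLp.smul_apply, smul_eq_mul,
      Fin.zero_eta, Fin.mk_one, Matrix.cons_val_zero, Matrix.cons_val_one, Matrix.cons_val_fin_one,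
      Int.cast_sub, Int.cast_neg]
  · ring
  · linear_combination ((m.1 + m.2 : ℝ) / 4) * h3

theorem dot_rotRT (k v : V2) : dot k (rotRT v) = dot (rotR k) v := by
  simp only [dot, rotR, rotRT, vec, Matrix.cons_val_zero, Matrix.cons_val_one,
    Matrix.cons_val_fin_one]
  ring

theorem Rop_add_lat {k : V2} {f : V2 → ℂ}
    (hf : ∀ x m, f (x + lat m) = Complex.exp (Complex.I * dot k (lat m)) * f x) (x : V2)
    (m : ℤ × ℤ) :
    Rop f (x + lat m) = Complex.exp (Complex.I * dot (rotR k) (lat m)) * Rop f x := by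
  have hρ : rotXc (x + lat m) = rotXc x + lat (m.2, -m.1 - m.2) := by
    simp only [rotXc_apply, ← rotRT_lat, ← rotRTEquiv_apply, add_sub_right_comm, map_add]
    abel
  rw [Rop_eq_comp, Function.comp_apply, Function.comp_apply, hρ, hf, ← rotRT_lat, dot_rotRT]

theorem exp_I_dot_add_dlat_lat (k : V2) (n m : ℤ × ℤ) :
    Complex.exp (Complex.I * dot (k + dlat n) (lat m)) =
      Complex.exp (Complex.I * dot k (lat m)) := by
  have hsplit :
      dot (k + dlat n) (lat m) = dot k (lat m) + (n.1 * m.1 + n.2 * m.2 : ℤ) * (2 * π) := by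
    have h3 : Real.sqrt 3 ≠ 0 := by positivity
    simp only [dot, dlat, lat, dk1, dk2, v1, v2, vec, PiLp.add_apply, PiLp.smul_apply, smul_eq_mul,
      Matrix.cons_val_zero, Matrix.cons_val_one, Matrix.cons_val_fin_one, Int.cast_add, Int.cast_mul]
    field_simp
    ring
  have hperiod (N : ℤ) : Complex.I * ((N * (2 * π) : ℝ) : ℂ) = N * (2 * π * Complex.I) := by
    push_cast; ring
  rw [hsplit, Complex.ofReal_add, mul_add, Complex.exp_add, hperiod,
    Complex.exp_int_mul_two_pi_mul_I, mul_one]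

theorem statement6_general (V : V2 → ℝ)
    (hVR : ∀ x : V2, V (xc + rotRT (x - xc)) = V x) :
    (∀ f : V2 → ℂ, ContDiff ℝ 2 f → ∀ x : V2,
      -lap (Rop f) x + (V x : ℂ) * Rop f x =
        Rop (fun y => -lap f y + (V y : ℂ) * f y) x) ∧
    (∀ k : V2, ∀ f : V2 → ℂ,
      (∀ x : V2, ∀ m : ℤ × ℤ, f (x + lat m) = Complex.exp (Complex.I * (dot k (lat m))) * f x) →
      (∀ x : V2, ∀ m : ℤ × ℤ,
        Rop f (x + lat m) = Complex.exp (Complex.I * (dot (rotR k) (lat m))) * Rop f x)) ∧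
    (∀ Kstar : V2, (∃ m : ℤ × ℤ, rotR Kstar - Kstar = dlat m) →
      ∀ E : ℝ, ∀ φ : V2 → ℂ, ContDiff ℝ 2 φ →
      (∀ x : V2, -lap φ x + (V x : ℂ) * φ x = (E : ℂ) * φ x) →
      (∀ x : V2, ∀ m : ℤ × ℤ,
        φ (x + lat m) = Complex.exp (Complex.I * (dot Kstar (lat m))) * φ x) →
      ((∀ x : V2, -lap (Rop φ) x + (V x : ℂ) * Rop φ x = (E : ℂ) * Rop φ x) ∧
       (∀ x : V2, ∀ m : ℤ × ℤ,
         Rop φ (x + lat m) = Complex.exp (Complex.I * (dot Kstar (lat m))) * Rop φ x))) := by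
  have hcomm (f : V2 → ℂ) (hf : ContDiff ℝ 2 f) (x : V2) :
      -lap (Rop f) x + (V x : ℂ) * Rop f x = Rop (fun y => -lap f y + (V y : ℂ) * f y) x := by
    rw [lap_Rop hf]
    simp only [Rop, hVR]
  refine ⟨hcomm, fun k f hf => Rop_add_lat hf, ?_⟩
  rintro Kstar ⟨n, hn⟩ E φ hφ heigen hper
  refine ⟨fun x => by rw [hcomm φ hφ, Rop, heigen, Rop], fun x m => ?_⟩
  rw [Rop_add_lat hper, sub_eq_iff_eq_add'.mp hn, exp_I_dot_add_dlat_lat]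

/-- Let `V : ℝ² → ℝ` be continuous with `V(x_c + Rᵀ(x − x_c)) = V(x)`.
Then (a) `−Δ + V` commutes with `ℛ` on `C²` functions; (b) `ℛ` maps `k`-pseudo-periodic
functions to `Rk`-pseudo-periodic functions; consequently, if `RK⋆ − K⋆ ∈ Λ_h*` and `φ`
is a `C²`, `K⋆`-pseudo-periodic solution of `(−Δ + V)φ = Eφ`, then so is `ℛ[φ]`. -/
theorem statement6 (V : V2 → ℝ) (hVc : Continuous V)
    (hVR : ∀ x : V2, V (xc + rotRT (x - xc)) = V x) :
    (∀ f : V2 → ℂ, ContDiff ℝ 2 f → ∀ x : V2,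
      -lap (Rop f) x + (V x : ℂ) * Rop f x =
        Rop (fun y => -lap f y + (V y : ℂ) * f y) x) ∧
    (∀ k : V2, ∀ f : V2 → ℂ,
      (∀ x : V2, ∀ m : ℤ × ℤ, f (x + lat m) = Complex.exp (Complex.I * (dot k (lat m))) * f x) →
      (∀ x : V2, ∀ m : ℤ × ℤ,
        Rop f (x + lat m) = Complex.exp (Complex.I * (dot (rotR k) (lat m))) * Rop f x)) ∧
    (∀ Kstar : V2, (∃ m : ℤ × ℤ, rotR Kstar - Kstar = dlat m) →
      ∀ E : ℝ, ∀ φ : V2 → ℂ, ContDiff ℝ 2 φ →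
      (∀ x : V2, -lap φ x + (V x : ℂ) * φ x = (E : ℂ) * φ x) →
      (∀ x : V2, ∀ m : ℤ × ℤ,
        φ (x + lat m) = Complex.exp (Complex.I * (dot Kstar (lat m))) * φ x) →
      ((∀ x : V2, -lap (Rop φ) x + (V x : ℂ) * Rop φ x = (E : ℂ) * Rop φ x) ∧
       (∀ x : V2, ∀ m : ℤ × ℤ,
         Rop φ (x + lat m) = Complex.exp (Complex.I * (dot Kstar (lat m))) * Rop φ x))) :=
  statement6_general V hVR
end
end

section
/- There exists a constant c′ > 0 such that for all I ∈ {A, B}, all ν ∈ {1, 2, 3}, and all z, y ∈ ℝ² with |z| < 0.33/√3 and |y| < 0.33/√3, there exists l₀ ∈ {0, 1, 2, 3, 4, 5} with |z + e_{I,ν} − y| − |z − R₆₀^{l₀} y| ≥ c′ · (1/√3). -/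
noncomputable section

open scoped Real

/-!
The six points `R₆₀^l y` form a regular hexagon, so one of them makes an angle of at most `60°`
with `z`; then `|z − R₆₀^l y| ≤ max(|z|, |y|) < 0.33/√3`, while
`|z + e_{I,ν} − y| ≥ |e_{I,ν}| − |z| − |y| > 0.34/√3`, so `c′ = 0.01` works.
The angle bound comes from the frame identity `∑_{l<3} ⟨z, R₆₀^l y⟩² = (3/2)|z|²|y|²`, which gives
`|⟨z, R₆₀^l y⟩| ≥ |z||y|/2` for some `l < 3`; since `R₆₀³ = −1`, the sign is fixed by `l ↦ l + 3`.
-/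

open scoped RealInnerProductSpace

lemma norm_sub_le_max_of_half_le_inner {F : Type*} [NormedAddCommGroup F] [InnerProductSpace ℝ F]
    {z w : F} (h : ‖z‖ * ‖w‖ / 2 ≤ ⟪z, w⟫) : ‖z - w‖ ≤ max ‖z‖ ‖w‖ := by
  have hsq : ‖z - w‖ ^ 2 ≤ max ‖z‖ ‖w‖ ^ 2 := by
    rw [norm_sub_sq_real]
    rcases le_total ‖z‖ ‖w‖ with hle | hle
    · rw [max_eq_right hle]; nlinarith [norm_nonneg z]
    · rw [max_eq_left hle]; nlinarith [norm_nonneg w]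
  exact le_of_sq_le_sq hsq (le_max_of_le_left (norm_nonneg z))

lemma norm_iterate_of_norm_apply {E : Type*} [Norm E] {f : E → E} (hf : ∀ x, ‖f x‖ = ‖x‖)
    (n : ℕ) (x : E) : ‖f^[n] x‖ = ‖x‖ := by
  induction n with
  | zero => rfl
  | succ n ih => rw [Function.iterate_succ_apply', hf, ih]

lemma norm_sq_eq_coord (x : V2) : ‖x‖ ^ 2 = x 0 ^ 2 + x 1 ^ 2 := by
  simp [EuclideanSpace.real_norm_sq_eq, Fin.sum_univ_two]

lemma inner_eq_coord (x y : V2) : ⟪x, y⟫ = x 0 * y 0 + x 1 * y 1 := by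
  simp [PiLp.inner_apply, Fin.sum_univ_two, mul_comm]

lemma sqrt_three_sq : Real.sqrt 3 ^ 2 = 3 := Real.sq_sqrt (by norm_num)

@[simp] lemma rot60_apply_zero (x : V2) :
    rot60 x 0 = 1 / 2 * x 0 + Real.sqrt 3 / 2 * x 1 := by simp [rot60, vec]

@[simp] lemma rot60_apply_one (x : V2) :
    rot60 x 1 = -(Real.sqrt 3 / 2) * x 0 + 1 / 2 * x 1 := by simp [rot60, vec]

lemma norm_rot60 (x : V2) : ‖rot60 x‖ = ‖x‖ := by
  rw [← sq_eq_sq₀ (norm_nonneg _) (norm_nonneg _), norm_sq_eq_coord, norm_sq_eq_coord,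
    rot60_apply_zero, rot60_apply_one]
  linear_combination (x 0 ^ 2 / 4 + x 1 ^ 2 / 4) * sqrt_three_sq

lemma norm_rotR (x : V2) : ‖rotR x‖ = ‖x‖ := by
  rw [← sq_eq_sq₀ (norm_nonneg _) (norm_nonneg _), norm_sq_eq_coord, norm_sq_eq_coord]
  simp only [rotR, vec, PiLp.toLp_apply, Matrix.cons_val_zero, Matrix.cons_val_one]
  linear_combination (x 0 ^ 2 / 4 + x 1 ^ 2 / 4) * sqrt_three_sq

lemma rot60_iterate_three (x : V2) : rot60^[3] x = -x := by
  ext i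
  fin_cases i
  · simp only [Function.iterate_succ_apply', Function.iterate_zero_apply, Fin.zero_eta,
      rot60_apply_zero, rot60_apply_one, PiLp.neg_apply]
    linear_combination (-(3 / 8) * x 0 - Real.sqrt 3 / 8 * x 1) * sqrt_three_sq
  · simp only [Function.iterate_succ_apply', Function.iterate_zero_apply, Fin.mk_one,
      rot60_apply_zero, rot60_apply_one, PiLp.neg_apply]
    linear_combination (Real.sqrt 3 / 8 * x 0 - 3 / 8 * x 1) * sqrt_three_sq

lemma sum_inner_rot60_iterate_sq (z y : V2) :
    ∑ l : Fin 3, ⟪z, rot60^[l] y⟫ ^ 2 = 3 / 2 * (‖z‖ * ‖y‖) ^ 2 := by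
  simp only [Fin.sum_univ_three, Fin.val_zero, Fin.val_one, Fin.val_two,
    Function.iterate_succ_apply', Function.iterate_zero_apply, mul_pow, norm_sq_eq_coord,
    inner_eq_coord, rot60_apply_zero, rot60_apply_one]
  linear_combination ((z 0 * y 0 + z 1 * y 1) ^ 2 * (Real.sqrt 3 ^ 2 + 1) / 16
    + (z 0 * y 1 - z 1 * y 0) ^ 2 / 2
    - Real.sqrt 3 * (z 0 * y 0 + z 1 * y 1) * (z 0 * y 1 - z 1 * y 0) / 4) * sqrt_three_sq

lemma exists_le_abs_inner_rot60_iterate (z y : V2) :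
    ∃ l : Fin 3, ‖z‖ * ‖y‖ / 2 ≤ |⟪z, rot60^[l] y⟫| := by
  by_contra! h
  have hsum := sum_inner_rot60_iterate_sq z y
  have hsq : ∀ l : Fin 3, ⟪z, rot60^[l] y⟫ ^ 2 ≤ (‖z‖ * ‖y‖ / 2) ^ 2 := fun l =>
    sq_le_sq' (abs_lt.1 (h l)).1.le (abs_lt.1 (h l)).2.le
  have hpos : 0 < ‖z‖ * ‖y‖ / 2 := (abs_nonneg _).trans_lt (h 0)
  simp only [Fin.sum_univ_three] at hsum
  nlinarith [hsq 0, hsq 1, hsq 2]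

lemma exists_le_inner_rot60_iterate (z y : V2) :
    ∃ l : Fin 6, ‖z‖ * ‖y‖ / 2 ≤ ⟪z, rot60^[l] y⟫ := by
  obtain ⟨l, hl⟩ := exists_le_abs_inner_rot60_iterate z y
  rcases le_total 0 ⟪z, rot60^[l] y⟫ with hnonneg | hnonpos
  · exact ⟨⟨l, by omega⟩, by rwa [abs_of_nonneg hnonneg] at hl⟩
  · refine ⟨⟨3 + l, by omega⟩, ?_⟩
    rw [abs_of_nonpos hnonpos] at hl
    rwa [Function.iterate_add_apply, rot60_iterate_three, inner_neg_right]

lemma exists_norm_sub_rot60_iterate_le (z y : V2) :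
    ∃ l : Fin 6, ‖z - rot60^[l] y‖ ≤ max ‖z‖ ‖y‖ := by
  obtain ⟨l, hl⟩ := exists_le_inner_rot60_iterate z y
  refine ⟨l, ?_⟩
  rw [← norm_iterate_of_norm_apply norm_rot60 l y] at hl ⊢
  exact norm_sub_le_max_of_half_le_inner hl

lemma norm_eVec (I : Bool) (ν : Fin 3) : ‖eVec I ν‖ = 1 / Real.sqrt 3 := by
  have hA : ‖eA ν‖ = 1 / Real.sqrt 3 := by
    rw [eA, norm_iterate_of_norm_apply norm_rotR, ← sq_eq_sq₀ (norm_nonneg _) (by positivity),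
      norm_sq_eq_coord]
    simp [eA1, vec]
  cases I <;> simp [eVec, eB, hA]

/-- (Geometric Lemma, part 1.) There is `c′ > 0` so that for all
`I ∈ {A, B}`, `ν ∈ {1,2,3}` and `z, y` with `|z|, |y| < 0.33/√3`, some `l₀ ∈ {0,…,5}`
satisfies `|z + e_{I,ν} − y| − |z − R₆₀^{l₀} y| ≥ c′ · (1/√3)`. -/
theorem statement10 :
    ∃ c' : ℝ, 0 < c' ∧ ∀ (I : Bool) (ν : Fin 3) (z y : V2),
      ‖z‖ < 0.33 / Real.sqrt 3 → ‖y‖ < 0.33 / Real.sqrt 3 →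
      ∃ l₀ : Fin 6,
        c' * (1 / Real.sqrt 3) ≤ ‖z + eVec I ν - y‖ - ‖z - rot60^[(l₀ : ℕ)] y‖ := by
  refine ⟨0.01, by norm_num, fun I ν z y hz hy => ?_⟩
  obtain ⟨l, hl⟩ := exists_norm_sub_rot60_iterate_le z y
  refine ⟨l, ?_⟩
  have hmax : max ‖z‖ ‖y‖ < 0.33 / Real.sqrt 3 := max_lt hz hy
  have htri : ‖eVec I ν‖ ≤ ‖z + eVec I ν - y‖ + ‖z‖ + ‖y‖ := by
    calc ‖eVec I ν‖ = ‖(z + eVec I ν - y) - z + y‖ := by abel_nf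
      _ ≤ _ := (norm_add_le _ _).trans (by gcongr; exact norm_sub_le _ _)
  rw [norm_eVec] at htri
  have hscale : (0.33 : ℝ) / Real.sqrt 3 = 0.33 * (1 / Real.sqrt 3) := by ring
  linarith
end
end

section
/- There exists a constant c″ > 0 such that for all z, y ∈ ℝ² with |z| < 0.33/√3 and |y| < 0.33/√3, and for every m = (m₁, m₂) ∈ ℤ², there exists l₀ ∈ {0, 1, 2, 3, 4, 5} with |z − (m₁v₁ + m₂v₂) − y| − |z − R₆₀^{l₀} y| ≥ c″ |m|, where |m| denotes the Euclidean norm of m. -/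
noncomputable section

open scoped Real

/-! Already `l₀ = 0` works. A nonzero lattice point has length at least `1`, since
`‖lat m‖² = m₁² + m₂² + m₁m₂` is a positive integer, and `|m| ≤ √2 ‖lat m‖`; meanwhile
`‖z - y‖ < 0.4`, so the reverse triangle inequality gives the bound with `c″ = 1/10`. -/

lemma norm_sub_sub_norm_sub_ge {E : Type*} [SeminormedAddCommGroup E] (z w y : E) :
    ‖w‖ - 2 * ‖z - y‖ ≤ ‖z - w - y‖ - ‖z - y‖ := by
  have h : ‖w‖ - ‖z - y‖ ≤ ‖z - w - y‖ := by
    rw [show z - w - y = -(w - (z - y)) by abel, norm_neg]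
    exact norm_sub_norm_le w (z - y)
  linarith

lemma norm_lat_sq (m : ℤ × ℤ) :
    ‖lat m‖ ^ 2 = (m.1 : ℝ) ^ 2 + (m.2 : ℝ) ^ 2 + (m.1 : ℝ) * (m.2 : ℝ) := by
  have h3 : Real.sqrt 3 ^ 2 = 3 := Real.sq_sqrt (by norm_num)
  simp only [EuclideanSpace.real_norm_sq_eq, Fin.sum_univ_two, lat, v1, v2, vec, PiLp.add_apply,
    PiLp.smul_apply, Matrix.cons_val_zero, Matrix.cons_val_one, smul_eq_mul]
  linear_combination ((m.1 : ℝ) + m.2) ^ 2 / 4 * h3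

lemma one_le_norm_lat {m : ℤ × ℤ} (hm : m ≠ 0) : 1 ≤ ‖lat m‖ := by
  have hform : (1 : ℤ) ≤ m.1 ^ 2 + m.2 ^ 2 + m.1 * m.2 := by
    obtain ⟨a, b⟩ := m
    have hab : a ≠ 0 ∨ b ≠ 0 := by
      by_contra! h
      exact hm (Prod.ext h.1 h.2)
    -- twice the form is `a² + b² + (a + b)²`, a positive even integer
    have : 0 < a ^ 2 + b ^ 2 := by
      rcases hab with h | h <;> positivity
    nlinarith [sq_nonneg (a + b)]
  have hsq : (1 : ℝ) ≤ ‖lat m‖ ^ 2 := by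
    rw [norm_lat_sq]
    exact_mod_cast hform
  nlinarith [norm_nonneg (lat m)]

lemma znorm_le_sqrt_two_mul_norm_lat (m : ℤ × ℤ) : znorm m ≤ Real.sqrt 2 * ‖lat m‖ := by
  have h : (m.1 : ℝ) ^ 2 + (m.2 : ℝ) ^ 2 ≤ 2 * ‖lat m‖ ^ 2 := by
    rw [norm_lat_sq]
    nlinarith [sq_nonneg ((m.1 : ℝ) + m.2)]
  calc znorm m ≤ Real.sqrt (2 * ‖lat m‖ ^ 2) := Real.sqrt_le_sqrt h
    _ = Real.sqrt 2 * ‖lat m‖ := by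
      rw [Real.sqrt_mul zero_le_two, Real.sqrt_sq (norm_nonneg _)]

/-- (Geometric Lemma, part 2.) There is `c″ > 0` so that for all
`z, y` with `|z|, |y| < 0.33/√3` and every `m ∈ ℤ²`, some `l₀ ∈ {0,…,5}` satisfies
`|z − (m₁v₁ + m₂v₂) − y| − |z − R₆₀^{l₀} y| ≥ c″ |m|`. -/
theorem statement11 :
    ∃ c'' : ℝ, 0 < c'' ∧ ∀ z y : V2,
      ‖z‖ < 0.33 / Real.sqrt 3 → ‖y‖ < 0.33 / Real.sqrt 3 →
      ∀ m : ℤ × ℤ, ∃ l₀ : Fin 6,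
        c'' * znorm m ≤ ‖z - lat m - y‖ - ‖z - rot60^[(l₀ : ℕ)] y‖ := by
  refine ⟨1 / 10, by norm_num, fun z y hz hy m => ⟨0, ?_⟩⟩
  rw [Fin.val_zero, Function.iterate_zero_apply]
  rcases eq_or_ne m 0 with rfl | hm
  · simp [lat, znorm]
  have hsqrt3 : (1.7 : ℝ) ≤ Real.sqrt 3 := Real.le_sqrt_of_sq_le (by norm_num)
  have hsqrt2 : Real.sqrt 2 ≤ 1.5 := Real.sqrt_le_iff.mpr ⟨by norm_num, by norm_num⟩
  have hr : 0.33 / Real.sqrt 3 ≤ 0.2 := by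
    rw [div_le_iff₀ (by linarith)]
    linarith
  have hzy : ‖z - y‖ < 0.4 := by
    linarith [norm_sub_le z y]
  have hlat := one_le_norm_lat hm
  have hzn := znorm_le_sqrt_two_mul_norm_lat m
  have hfar := norm_sub_sub_norm_sub_ge z (lat m) y
  nlinarith
end
end

section
/- Let r₀ > 0, c₀′ > 0 and c₀ ∈ (0, 1]. There exist constants C₁, C₂, c₁ > 0 and λ⋆ > 0, depending only on r₀, c₀′ and c₀, such that the following holds for every λ ≥ λ⋆. Let V₀: ℝ² → ℝ be measurable with −1 ≤ V₀(y) ≤ 0 for all y and V₀(y) = 0 whenever |y| > r₀; let μ satisfy c₀λ ≤ μ ≤ λ; and let p₀: ℝ² → [0, ∞) be square-integrable with ∫_{ℝ²} p₀(x)² dx = 1 and satisfy, for every x ∈ ℝ², the integral equation p₀(x) = ∫_{ℝ²} 𝒦(μ|x − y|) λ² |V₀(y)| p₀(y) dy. Then p₀(x) ≤ C₁ e^{−c₁ λ |x|} for every x with |x| ≥ r₀ + c₀′, and p₀(x) ≤ C₂ λ for every x ∈ ℝ². -/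
noncomputable section

open scoped Real

/-!
Since `0 ≤ 𝒦(r) ≤ e^{-r}/√r` (bound `2r + ζ` below by `2r` and use `Γ(1/2) = √π`) and `λ²|V₀|`
is at most `λ²` and supported in `B(0, r₀)`, Cauchy–Schwarz in the integral equation together with
`‖p₀‖₂ = 1` gives `p₀(x) ≤ λ² ‖1_{B(0,r₀)} g(μ|x - ·|)‖₂` with `g(t) = e^{-t}/√t`.
Over the whole plane `‖g(μ|·|)‖₂ = √π/μ`, whence `p₀ ≤ √π λ/c₀`. If `|x| ≥ r₀ + c₀'` and
`|y| ≤ r₀`, then `|x - y| ≥ c₀'|x|/(r₀ + c₀')` and, once `λ ≥ 1/(c₀c₀')`, `μ|x - y| ≥ 1`; so the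
truncated norm is at most `√π r₀ e^{-c₀λc₀'|x|/(r₀ + c₀')}`, and half of this exponential absorbs
the factor `λ²`.
-/

open MeasureTheory Set Metric

def kkerMajorant (t : ℝ) : ℝ := Real.exp (-t) / √t

lemma Kker_nonneg {r : ℝ} (hr : 0 ≤ r) : 0 ≤ Kker r := by
  unfold Kker
  exact mul_nonneg (by positivity)
    (setIntegral_nonneg measurableSet_Ioi fun ζ (hζ : 0 < ζ) => by positivity)

lemma integral_exp_neg_mul_rpow_le {r : ℝ} (hr : 0 < r) :
    ∫ ζ in Ioi (0 : ℝ), Real.exp (-ζ) * ζ ^ (-(1/2 : ℝ)) * (2 * r + ζ) ^ (-(1/2 : ℝ))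
      ≤ √π * (2 * r) ^ (-(1/2 : ℝ)) := by
  have hΓ : ∫ ζ in Ioi (0 : ℝ), Real.exp (-ζ) * ζ ^ (-(1/2 : ℝ)) = √π := by
    rw [← Real.Gamma_one_half_eq, Real.Gamma_eq_integral one_half_pos]
    norm_num
  have hint : IntegrableOn (fun ζ : ℝ => Real.exp (-ζ) * ζ ^ (-(1/2 : ℝ))) (Ioi 0) := by
    convert Real.GammaIntegral_convergent one_half_pos using 3
    norm_num
  rw [← hΓ, ← integral_mul_const]
  refine integral_mono_of_nonneg ?_ (hint.mul_const _) ?_ <;>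
    filter_upwards [ae_restrict_mem measurableSet_Ioi] with ζ (hζ : 0 < ζ)
  · positivity
  · gcongr _ * ?_
    exact Real.rpow_le_rpow_of_nonpos (by positivity) (by linarith) (by norm_num)

lemma Kker_le_kkerMajorant {r : ℝ} (hr : 0 < r) : Kker r ≤ kkerMajorant r := by
  have h2r : (2 * r) ^ (-(1/2 : ℝ)) = (√2 * √r)⁻¹ := by
    rw [Real.rpow_neg (by positivity), ← Real.sqrt_eq_rpow, Real.sqrt_mul zero_le_two]
  have hπ : √π ≤ 2 * π * √2 := by
    nlinarith [Real.sqrt_le_sqrt (show π ≤ π ^ 2 by nlinarith [Real.pi_gt_three]),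
      Real.sqrt_sq Real.pi_pos.le, Real.one_lt_sqrt_two, Real.sqrt_nonneg π]
  calc Kker r ≤ (2 * π)⁻¹ * Real.exp (-r) * (√π * (2 * r) ^ (-(1/2 : ℝ))) := by
        unfold Kker; gcongr; exact integral_exp_neg_mul_rpow_le hr
    _ = √π / (2 * π * √2) * (Real.exp (-r) / √r) := by rw [h2r]; field_simp
    _ ≤ kkerMajorant r := by
        apply mul_le_of_le_one_left (by positivity)
        rw [div_le_one (by positivity)]; exact hπ

lemma kkerMajorant_nonneg (t : ℝ) : 0 ≤ kkerMajorant t := by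
  unfold kkerMajorant; positivity

lemma kkerMajorant_le_exp_neg {t : ℝ} (ht : 1 ≤ t) : kkerMajorant t ≤ Real.exp (-t) :=
  div_le_self (Real.exp_nonneg _) (Real.one_le_sqrt.2 ht)

lemma measurable_kkerMajorant : Measurable kkerMajorant := by
  unfold kkerMajorant; fun_prop

lemma abs_Kker_le {r : ℝ} (hr : 0 < r) : |Kker r| ≤ kkerMajorant r := by
  rw [abs_of_nonneg (Kker_nonneg hr.le)]
  exact Kker_le_kkerMajorant hr

lemma eqOn_radial_kkerMajorant_sq {μ : ℝ} (hμ : 0 < μ) :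
    EqOn (fun t : ℝ => t ^ (Module.finrank ℝ V2 - 1) • kkerMajorant (μ * t) ^ 2)
      (fun t => Real.exp (-(2 * μ) * t) / μ) (Ioi 0) := fun t (ht : 0 < t) => by
  simp only [finrank_euclideanSpace_fin, smul_eq_mul, kkerMajorant, div_pow,
    Real.sq_sqrt (by positivity : 0 ≤ μ * t), sq (Real.exp _), ← Real.exp_add]
  field_simp
  ring_nf

lemma integrable_kkerMajorant_sq {μ : ℝ} (hμ : 0 < μ) :
    Integrable (fun z : V2 => kkerMajorant (μ * ‖z‖) ^ 2) := by
  rw [integrable_fun_norm_addHaar volume (f := fun t => kkerMajorant (μ * t) ^ 2),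
    integrableOn_congr_fun (eqOn_radial_kkerMajorant_sq hμ) measurableSet_Ioi]
  exact (exp_neg_integrableOn_Ioi 0 (by positivity)).div_const μ

lemma integral_kkerMajorant_sq {μ : ℝ} (hμ : 0 < μ) :
    ∫ z : V2, kkerMajorant (μ * ‖z‖) ^ 2 = π / μ ^ 2 := by
  have hexp : ∫ t in Ioi (0 : ℝ), Real.exp (-(2 * μ) * t) / μ = 1 / (2 * μ ^ 2) := by
    rw [integral_div, integral_exp_mul_Ioi (by linarith) 0]
    field_simp
    simp
  rw [integral_fun_norm_addHaar volume (fun t => kkerMajorant (μ * t) ^ 2),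
    setIntegral_congr_fun measurableSet_Ioi (eqOn_radial_kkerMajorant_sq hμ), hexp]
  simp [EuclideanSpace.volume_ball_fin_two, Measure.real, Real.pi_pos.le]
  field_simp

lemma eLpNorm_kkerMajorant {μ : ℝ} (hμ : 0 < μ) (x : V2) :
    eLpNorm (fun y => kkerMajorant (μ * ‖x - y‖)) 2 volume = ENNReal.ofReal (√π / μ) := by
  have hmeas : AEStronglyMeasurable (fun z : V2 => kkerMajorant (μ * ‖z‖)) volume :=
    (measurable_kkerMajorant.comp (measurable_const.mul measurable_norm)).aestronglyMeasurable
  have hmem : MemLp (fun z : V2 => kkerMajorant (μ * ‖z‖)) 2 volume :=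
    (memLp_two_iff_integrable_sq hmeas).2 (integrable_kkerMajorant_sq hμ)
  rw [← Function.comp_def (fun z : V2 => kkerMajorant (μ * ‖z‖)) (fun y => x - y),
    eLpNorm_comp_measurePreserving hmeas (Measure.measurePreserving_sub_left volume x),
    hmem.eLpNorm_eq_integral_rpow_norm two_ne_zero ENNReal.ofNat_ne_top]
  simp only [Real.norm_eq_abs, ENNReal.toReal_ofNat, Real.rpow_two, sq_abs,
    integral_kkerMajorant_sq hμ, ← one_div, ← Real.sqrt_eq_rpow, Real.sqrt_div' _ (sq_nonneg μ),
    Real.sqrt_sq hμ.le]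

lemma eLpNorm_two_eq_one_of_integral_sq {α : Type*} [MeasurableSpace α] {m : Measure α}
    {f : α → ℝ} (hf : MemLp f 2 m) (hnorm : ∫ a, f a ^ 2 ∂m = 1) : eLpNorm f 2 m = 1 := by
  rw [hf.eLpNorm_eq_integral_rpow_norm two_ne_zero ENNReal.ofNat_ne_top]
  simp [hnorm]

lemma div_mul_norm_le_norm_sub {E : Type*} [SeminormedAddCommGroup E] {r c : ℝ} (hc : 0 < c)
    {x y : E} (hy : ‖y‖ ≤ r) (hx : r + c ≤ ‖x‖) : c / (r + c) * ‖x‖ ≤ ‖x - y‖ := by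
  have hr : 0 ≤ r := (norm_nonneg y).trans hy
  have hxy : ‖x‖ - ‖y‖ ≤ ‖x - y‖ := norm_sub_norm_le x y
  rw [div_mul_eq_mul_div, div_le_iff₀ (by positivity)]
  nlinarith

lemma abs_kkerMajorant_le_exp {E : Type*} [SeminormedAddCommGroup E] {r c μ : ℝ} (hc : 0 < c)
    (hμ : 1 ≤ μ * c) {x y : E} (hy : ‖y‖ ≤ r) (hx : r + c ≤ ‖x‖) :
    |kkerMajorant (μ * ‖x - y‖)| ≤ Real.exp (-(μ * (c / (r + c)) * ‖x‖)) := by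
  have hμ0 : 0 < μ := pos_of_mul_pos_left (one_pos.trans_le hμ) hc.le
  have hfar : c ≤ ‖x - y‖ := by linarith [norm_sub_norm_le x y]
  rw [abs_of_nonneg (kkerMajorant_nonneg _)]
  refine (kkerMajorant_le_exp_neg (hμ.trans (by gcongr))).trans (Real.exp_le_exp.2 ?_)
  rw [neg_le_neg_iff, mul_assoc]
  exact mul_le_mul_of_nonneg_left (div_mul_norm_le_norm_sub hc hy hx) hμ0.le

lemma eLpNorm_indicator_closedBall_le {f : V2 → ℝ} {r e : ℝ} (hr : 0 ≤ r)
    (hf : ∀ y ∈ closedBall (0 : V2) r, |f y| ≤ e) :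
    eLpNorm ((closedBall (0 : V2) r).indicator f) 2 volume ≤ ENNReal.ofReal (√π * r * e) := by
  have he : 0 ≤ e := (abs_nonneg _).trans (hf 0 (mem_closedBall_self hr))
  have hle : ∀ y, ‖(closedBall (0 : V2) r).indicator f y‖
      ≤ (closedBall (0 : V2) r).indicator (fun _ => e) y := fun y => by
    by_cases hy : y ∈ closedBall (0 : V2) r
    · simpa [indicator_of_mem hy] using hf y hy
    · simp [indicator_of_notMem hy]
  refine (eLpNorm_mono_real hle).trans_eq ?_
  rw [eLpNorm_indicator_const measurableSet_closedBall two_ne_zero ENNReal.ofNat_ne_top,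
    EuclideanSpace.volume_closedBall_fin_two, Real.enorm_eq_ofReal he, ENNReal.toReal_ofNat,
    ← ENNReal.ofReal_pow hr, ← ENNReal.ofReal_mul (by positivity),
    ENNReal.ofReal_rpow_of_nonneg (by positivity) (by norm_num), ← ENNReal.ofReal_mul he,
    ← Real.sqrt_eq_rpow, Real.sqrt_mul' _ Real.pi_pos.le, Real.sqrt_sq hr]
  ring_nf

lemma sq_mul_exp_neg_le {a R s lam : ℝ} (ha : 0 < a) (hR : 0 < R) (hs : R ≤ s) (hlam : 0 ≤ lam) :
    lam ^ 2 * Real.exp (-(2 * a * lam * s)) ≤ 2 / (a * R) ^ 2 * Real.exp (-(a * lam * s)) := by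
  have ht : 0 ≤ a * lam * s := by positivity [hR.le.trans hs]
  have hexp : (a * lam * s) ^ 2 * Real.exp (-(a * lam * s)) ≤ 2 := by
    have h := Real.pow_div_factorial_le_exp _ ht 2
    rw [Real.exp_neg, ← div_eq_mul_inv, div_le_iff₀ (Real.exp_pos _)]
    norm_num [Nat.factorial] at h
    linarith
  have hkey : lam ^ 2 * Real.exp (-(a * lam * s)) ≤ 2 / (a * R) ^ 2 := by
    rw [le_div_iff₀ (by positivity)]
    calc lam ^ 2 * Real.exp (-(a * lam * s)) * (a * R) ^ 2
        = (lam * (a * R)) ^ 2 * Real.exp (-(a * lam * s)) := by ring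
      _ ≤ (a * lam * s) ^ 2 * Real.exp (-(a * lam * s)) := by
        gcongr ?_ ^ 2 * _
        nlinarith [mul_le_mul_of_nonneg_left hs (mul_nonneg ha.le hlam)]
      _ ≤ 2 := hexp
  calc lam ^ 2 * Real.exp (-(2 * a * lam * s))
      = lam ^ 2 * Real.exp (-(a * lam * s)) * Real.exp (-(a * lam * s)) := by
        rw [mul_assoc (lam ^ 2), ← Real.exp_add]; ring_nf
    _ ≤ 2 / (a * R) ^ 2 * Real.exp (-(a * lam * s)) := by gcongr

structure IsAtomicGroundState (r₀ lam μ : ℝ) (V₀ p₀ : V2 → ℝ) : Prop where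
  abs_le_one : ∀ y, |V₀ y| ≤ 1
  eq_zero_of_lt_norm : ∀ y, r₀ < ‖y‖ → V₀ y = 0
  memLp : MemLp p₀ 2 volume
  integral_sq : ∫ y, p₀ y ^ 2 = 1
  eq_integral : ∀ x, p₀ x = ∫ y, Kker (μ * ‖x - y‖) * (lam ^ 2 * |V₀ y| * p₀ y)

namespace IsAtomicGroundState

variable {r₀ lam μ : ℝ} {V₀ p₀ : V2 → ℝ}

lemma norm_integrand_le (h : IsAtomicGroundState r₀ lam μ V₀ p₀) (hμ : 0 < μ) {x y : V2}
    (hyx : y ≠ x) :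
    ‖Kker (μ * ‖x - y‖) * (lam ^ 2 * |V₀ y| * p₀ y)‖
      ≤ lam ^ 2 * ‖((closedBall (0 : V2) r₀).indicator
          (fun y => kkerMajorant (μ * ‖x - y‖)) y) * p₀ y‖ := by
  rcases le_or_gt ‖y‖ r₀ with hy | hy
  · have hK := abs_Kker_le (mul_pos hμ (norm_sub_pos_iff.2 hyx.symm))
    rw [indicator_of_mem (mem_closedBall_zero_iff.2 hy)]
    calc ‖Kker (μ * ‖x - y‖) * (lam ^ 2 * |V₀ y| * p₀ y)‖
        = |Kker (μ * ‖x - y‖)| * |V₀ y| * (lam ^ 2 * |p₀ y|) := by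
          simp only [Real.norm_eq_abs, abs_mul, abs_abs, abs_of_nonneg (sq_nonneg lam)]; ring
      _ ≤ |kkerMajorant (μ * ‖x - y‖)| * 1 * (lam ^ 2 * |p₀ y|) := by
          gcongr ?_ * ?_ * _
          exacts [hK.trans (le_abs_self _), h.abs_le_one y]
      _ = lam ^ 2 * ‖kkerMajorant (μ * ‖x - y‖) * p₀ y‖ := by
          rw [Real.norm_eq_abs, abs_mul]; ring
  · rw [h.eq_zero_of_lt_norm y hy, abs_zero, mul_zero, zero_mul, mul_zero, norm_zero]
    positivity

lemma le_sq_mul_of_eLpNorm_le (h : IsAtomicGroundState r₀ lam μ V₀ p₀) (hμ : 0 < μ) {E : ℝ}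
    (hE0 : 0 ≤ E) {x : V2}
    (hE : eLpNorm ((closedBall (0 : V2) r₀).indicator fun y => kkerMajorant (μ * ‖x - y‖)) 2
      volume ≤ ENNReal.ofReal E) :
    p₀ x ≤ lam ^ 2 * E := by
  set f := (closedBall (0 : V2) r₀).indicator fun y => kkerMajorant (μ * ‖x - y‖)
  have hfm : AEStronglyMeasurable f volume :=
    (measurable_kkerMajorant.comp (measurable_const.mul (measurable_id.const_sub x).norm)
      |>.indicator measurableSet_closedBall).aestronglyMeasurable
  have hpt : ∀ᵐ y, ‖Kker (μ * ‖x - y‖) * (lam ^ 2 * |V₀ y| * p₀ y)‖ₑ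
      ≤ ENNReal.ofReal (lam ^ 2) * ‖(f • p₀) y‖ₑ := by
    filter_upwards [volume.ae_ne x] with y hyx
    rw [← ofReal_norm, ← ofReal_norm, ← ENNReal.ofReal_mul (sq_nonneg _)]
    exact ENNReal.ofReal_le_ofReal (h.norm_integrand_le hμ hyx)
  have hle : ENNReal.ofReal (p₀ x) ≤ ENNReal.ofReal (lam ^ 2 * E) := calc
    ENNReal.ofReal (p₀ x) ≤ ‖∫ y, Kker (μ * ‖x - y‖) * (lam ^ 2 * |V₀ y| * p₀ y)‖ₑ := by
      rw [h.eq_integral x, Real.enorm_eq_ofReal_abs]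
      exact ENNReal.ofReal_le_ofReal (le_abs_self _)
    _ ≤ ∫⁻ y, ‖Kker (μ * ‖x - y‖) * (lam ^ 2 * |V₀ y| * p₀ y)‖ₑ :=
      enorm_integral_le_lintegral_enorm _
    _ ≤ ∫⁻ y, ENNReal.ofReal (lam ^ 2) * ‖(f • p₀) y‖ₑ := lintegral_mono_ae hpt
    _ = ENNReal.ofReal (lam ^ 2) * eLpNorm (f • p₀) 1 volume := by
      rw [lintegral_const_mul' _ _ ENNReal.ofReal_ne_top, eLpNorm_one_eq_lintegral_enorm]
    _ ≤ ENNReal.ofReal (lam ^ 2) * (eLpNorm f 2 volume * eLpNorm p₀ 2 volume) := by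
      gcongr; exact eLpNorm_smul_le_mul_eLpNorm h.memLp.1 hfm
    _ ≤ ENNReal.ofReal (lam ^ 2 * E) := by
      rw [eLpNorm_two_eq_one_of_integral_sq h.memLp h.integral_sq, mul_one,
        ENNReal.ofReal_mul (sq_nonneg _)]
      gcongr
  exact (ENNReal.ofReal_le_ofReal_iff (by positivity)).1 hle

lemma le_mul (h : IsAtomicGroundState r₀ lam μ V₀ p₀) {c₀ : ℝ} (hc₀ : 0 < c₀) (hlam : 0 < lam)
    (hμ : c₀ * lam ≤ μ) (x : V2) : p₀ x ≤ √π / c₀ * lam := by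
  have hμ0 : 0 < μ := (mul_pos hc₀ hlam).trans_le hμ
  have hE := (eLpNorm_indicator_le (s := closedBall 0 r₀) _).trans
    (eLpNorm_kkerMajorant hμ0 x).le
  calc p₀ x ≤ lam ^ 2 * (√π / μ) := h.le_sq_mul_of_eLpNorm_le hμ0 (by positivity) hE
    _ = √π * lam * (lam / μ) := by ring
    _ ≤ √π * lam * (1 / c₀) := by
        gcongr _ * ?_
        rw [div_le_div_iff₀ hμ0 hc₀]
        linarith
    _ = √π / c₀ * lam := by ring

lemma le_exp (h : IsAtomicGroundState r₀ lam μ V₀ p₀) (hr₀ : 0 ≤ r₀) {c₀' c₁ : ℝ}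
    (hc₀' : 0 < c₀') (hμc : 1 ≤ μ * c₀') (hc₁ : 0 < c₁) (hlam : 0 ≤ lam)
    (hc₁μ : 2 * c₁ * lam ≤ μ * (c₀' / (r₀ + c₀'))) {x : V2} (hx : r₀ + c₀' ≤ ‖x‖) :
    p₀ x ≤ √π * r₀ * (2 / (c₁ * (r₀ + c₀')) ^ 2) * Real.exp (-(c₁ * lam * ‖x‖)) := by
  have hμ0 : 0 < μ := pos_of_mul_pos_left (one_pos.trans_le hμc) hc₀'.le
  have hE := eLpNorm_indicator_closedBall_le hr₀ fun y hy =>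
    abs_kkerMajorant_le_exp hc₀' hμc (x := x) (mem_closedBall_zero_iff.1 hy) hx
  calc p₀ x ≤ lam ^ 2 * (√π * r₀ * Real.exp (-(μ * (c₀' / (r₀ + c₀')) * ‖x‖))) :=
        h.le_sq_mul_of_eLpNorm_le hμ0 (by positivity) hE
    _ ≤ √π * r₀ * (lam ^ 2 * Real.exp (-(2 * c₁ * lam * ‖x‖))) := by
        rw [mul_left_comm]
        gcongr _ * (_ * Real.exp (-?_))
        exact mul_le_mul_of_nonneg_right hc₁μ (norm_nonneg x)
    _ ≤ √π * r₀ * (2 / (c₁ * (r₀ + c₀')) ^ 2 * Real.exp (-(c₁ * lam * ‖x‖))) := by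
        gcongr _ * ?_
        exact sq_mul_exp_neg_le hc₁ (by positivity) hx hlam
    _ = _ := by ring

end IsAtomicGroundState

theorem statement15_general (r₀ c₀' c₀ : ℝ) (hr₀ : 0 < r₀) (hc₀' : 0 < c₀')
    (hc₀0 : 0 < c₀) :
    ∃ C₁ C₂ c₁ lamS : ℝ, 0 < C₁ ∧ 0 < C₂ ∧ 0 < c₁ ∧ 0 < lamS ∧
      ∀ lam : ℝ, lamS ≤ lam →
      ∀ V₀ : V2 → ℝ, Measurable V₀ →
        (∀ y : V2, -1 ≤ V₀ y) → (∀ y : V2, V₀ y ≤ 0) →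
        (∀ y : V2, r₀ < ‖y‖ → V₀ y = 0) →
      ∀ μ : ℝ, c₀ * lam ≤ μ → μ ≤ lam →
      ∀ p₀ : V2 → ℝ, (∀ x : V2, 0 ≤ p₀ x) →
        MeasureTheory.MemLp p₀ 2 MeasureTheory.volume →
        (∫ x : V2, (p₀ x) ^ 2) = 1 →
        (∀ x : V2, p₀ x = ∫ y : V2, Kker (μ * ‖x - y‖) * (lam ^ 2 * |V₀ y| * p₀ y)) →
        ((∀ x : V2, r₀ + c₀' ≤ ‖x‖ → p₀ x ≤ C₁ * Real.exp (-(c₁ * lam * ‖x‖))) ∧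
         (∀ x : V2, p₀ x ≤ C₂ * lam)) := by
  set c₁ := c₀ * (c₀' / (r₀ + c₀')) / 2 with hc₁
  refine ⟨√π * r₀ * (2 / (c₁ * (r₀ + c₀')) ^ 2), √π / c₀, c₁, 1 / (c₀ * c₀'),
    by positivity, by positivity, by positivity, by positivity, ?_⟩
  intro lam hlam V₀ _ hV₁ hV₀ hVs μ hμ _ p₀ _ hp₀ hnorm heq
  have h : IsAtomicGroundState r₀ lam μ V₀ p₀ :=
    ⟨fun y => abs_le.2 ⟨hV₁ y, (hV₀ y).trans zero_le_one⟩, hVs, hp₀, hnorm, heq⟩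
  have hlam0 : 0 < lam := (by positivity : (0 : ℝ) < 1 / (c₀ * c₀')).trans_le hlam
  have hμc : 1 ≤ μ * c₀' := calc
    1 = c₀ * (1 / (c₀ * c₀')) * c₀' := by field_simp
    _ ≤ μ * c₀' := by gcongr; exact (mul_le_mul_of_nonneg_left hlam hc₀0.le).trans hμ
  have hc₁μ : 2 * c₁ * lam ≤ μ * (c₀' / (r₀ + c₀')) := calc
    2 * c₁ * lam = c₀ * lam * (c₀' / (r₀ + c₀')) := by rw [hc₁]; ring
    _ ≤ μ * (c₀' / (r₀ + c₀')) := by gcongr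
  exact ⟨fun x hx => h.le_exp hr₀.le hc₀' hμc (by positivity) hlam0.le hc₁μ hx,
    h.le_mul hc₀0 hlam0 hμ⟩

/-- Pointwise bounds on the atomic ground state: exponential decay
outside the potential well and a linear-in-`λ` bound everywhere. -/
theorem statement15 (r₀ c₀' c₀ : ℝ) (hr₀ : 0 < r₀) (hc₀' : 0 < c₀')
    (hc₀0 : 0 < c₀) (hc₀1 : c₀ ≤ 1) :
    ∃ C₁ C₂ c₁ lamS : ℝ, 0 < C₁ ∧ 0 < C₂ ∧ 0 < c₁ ∧ 0 < lamS ∧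
      ∀ lam : ℝ, lamS ≤ lam →
      ∀ V₀ : V2 → ℝ, Measurable V₀ →
        (∀ y : V2, -1 ≤ V₀ y) → (∀ y : V2, V₀ y ≤ 0) →
        (∀ y : V2, r₀ < ‖y‖ → V₀ y = 0) →
      ∀ μ : ℝ, c₀ * lam ≤ μ → μ ≤ lam →
      ∀ p₀ : V2 → ℝ, (∀ x : V2, 0 ≤ p₀ x) →
        MeasureTheory.MemLp p₀ 2 MeasureTheory.volume →
        (∫ x : V2, (p₀ x) ^ 2) = 1 →
        (∀ x : V2, p₀ x = ∫ y : V2, Kker (μ * ‖x - y‖) * (lam ^ 2 * |V₀ y| * p₀ y)) →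
        ((∀ x : V2, r₀ + c₀' ≤ ‖x‖ → p₀ x ≤ C₁ * Real.exp (-(c₁ * lam * ‖x‖))) ∧
         (∀ x : V2, p₀ x ≤ C₂ * lam)) :=
  statement15_general r₀ c₀' c₀ hr₀ hc₀' hc₀0
end
end

section
/- Fix a positive integer β_max and a constant A > 0. There exists a constant C > 0, depending only on A and β_max, with the following property. Let U ⊆ ℝ² be open, let δ > 0 and η > 0, and let F, F₀: U → ℂ be β_max-times continuously differentiable functions such that for every κ ∈ U and every multi-index β ∈ ℕ² with |β| ≤ β_max: |F(κ)| ≤ 1/10 and |F₀(κ)| ≤ 1/10; |∂^β F(κ)| ≤ A δ^{−|β|} and |∂^β F₀(κ)| ≤ A δ^{−|β|}; and |∂^β (F − F₀)(κ)| ≤ η δ^{−|β|}. Then for every κ ∈ U and every multi-index β with |β| ≤ β_max, |∂^β ( (1 + F)^{1/2} − (1 + F₀)^{1/2} )(κ)| ≤ C η δ^{−|β|}, where z^{1/2} denotes the principal branch of the complex square root (well-defined since |F|, |F₀| ≤ 1/10, so 1 + F and 1 + F₀ avoid the negative real axis). -/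
noncomputable section

open scoped Real

/-- The iterated partial derivative `∂^β = ∂₁^{β₁} ∂₂^{β₂}` for a multi-index
`β ∈ ℕ²`, acting on complex-valued functions on `ℝ²`. -/
def mderiv (β : ℕ × ℕ) (f : V2 → ℂ) : V2 → ℂ := (pd 0)^[β.1] ((pd 1)^[β.2] f)

/-!
Write `S = (1 + F)^{1/2}` and `S₀ = (1 + F₀)^{1/2}`. As `Re (1 + F) ≥ 9/10`, `Re S ≥ 1/2`.
Applying `∂^β` to `S² = 1 + F` with the Leibniz rule gives `∂^β F = 2 S ∂^β S` plus products of
derivatives of `S` of orders in `[1, |β|)`, so induction on `|β|` yields `|∂^β S| ≤ C δ^{-|β|}`.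
Likewise `D = S - S₀` satisfies `D (S + S₀) = F - F₀` with `|S + S₀| ≥ 1`; the Leibniz rule
expresses `(S + S₀) ∂^β D` through `∂^β (F - F₀)` and products of lower-order derivatives of `D`
(each carrying a factor `η`) with derivatives of `S + S₀`, and the same induction gives
`|∂^β D| ≤ C η δ^{-|β|}`.
-/

open Finset

section Leibniz

variable {U : Set V2}

lemma iterate_pd_congr {f g : V2 → ℂ} (hU : IsOpen U) (h : Set.EqOn f g U) (i : Fin 2)
    (t : ℕ) : Set.EqOn ((pd i)^[t] f) ((pd i)^[t] g) U := by
  induction t generalizing f g with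
  | zero => exact h
  | succ t ih =>
    refine ih fun x hx => ?_
    simp only [pd, (Filter.eventuallyEq_of_mem (hU.mem_nhds hx) h).fderiv_eq]

lemma mderiv_congr {f g : V2 → ℂ} (hU : IsOpen U) (h : Set.EqOn f g U) (β : ℕ × ℕ) :
    Set.EqOn (mderiv β f) (mderiv β g) U :=
  iterate_pd_congr hU (iterate_pd_congr hU h 1 β.2) 0 β.1

lemma contDiffOn_pd {f : V2 → ℂ} {t : ℕ} (hU : IsOpen U) (hf : ContDiffOn ℝ (t + 1 : ℕ) f U)
    (i : Fin 2) : ContDiffOn ℝ t (pd i f) U :=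
  ((hf.fderivWithin hU.uniqueDiffOn (by norm_cast)).clm_apply
    (contDiffOn_const (c := basis2 i))).congr fun x hx => by
      simp only [pd, fderivWithin_of_isOpen hU hx]

lemma contDiffOn_iterate_pd {f : V2 → ℂ} {t k : ℕ} (hU : IsOpen U)
    (hf : ContDiffOn ℝ (t + k : ℕ) f U) (i : Fin 2) : ContDiffOn ℝ t ((pd i)^[k] f) U := by
  induction k generalizing f with
  | zero => exact hf
  | succ k ih => exact ih (contDiffOn_pd hU (t := t + k) hf i)

lemma differentiableAt_of_contDiffOn {f : V2 → ℂ} {t : ℕ} (hU : IsOpen U)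
    (hf : ContDiffOn ℝ (t + 1 : ℕ) f U) {x : V2} (hx : x ∈ U) : DifferentiableAt ℝ f x :=
  (hf.differentiableOn (by norm_cast)).differentiableAt (hU.mem_nhds hx)

lemma iterate_pd_add {f g : V2 → ℂ} {t : ℕ} (hU : IsOpen U) (hf : ContDiffOn ℝ t f U)
    (hg : ContDiffOn ℝ t g U) (i : Fin 2) :
    Set.EqOn ((pd i)^[t] fun x => f x + g x) (fun x => (pd i)^[t] f x + (pd i)^[t] g x) U := by
  induction t generalizing f g with
  | zero => exact fun _ _ => rfl
  | succ t ih =>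
    have hpd : Set.EqOn (pd i fun x => f x + g x) (fun x => pd i f x + pd i g x) U :=
      fun x hx => by
        simp [pd, fderiv_fun_add (differentiableAt_of_contDiffOn hU hf hx)
          (differentiableAt_of_contDiffOn hU hg hx)]
    exact (iterate_pd_congr hU hpd i t).trans (ih (contDiffOn_pd hU hf i) (contDiffOn_pd hU hg i))

lemma iterate_pd_const_mul {f : V2 → ℂ} {t : ℕ} (hU : IsOpen U) (hf : ContDiffOn ℝ t f U)
    (c : ℂ) (i : Fin 2) :
    Set.EqOn ((pd i)^[t] fun x => c * f x) (fun x => c * (pd i)^[t] f x) U := by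
  induction t generalizing f with
  | zero => exact fun _ _ => rfl
  | succ t ih =>
    have hpd : Set.EqOn (pd i fun x => c * f x) (fun x => c * pd i f x) U := fun x hx => by
      simp [pd, fderiv_const_mul (differentiableAt_of_contDiffOn hU hf hx) c]
    exact (iterate_pd_congr hU hpd i t).trans (ih (contDiffOn_pd hU hf i))

lemma iterate_pd_sum {ι : Type*} {s : Finset ι} {h : ι → V2 → ℂ} {t : ℕ} (hU : IsOpen U)
    (hh : ∀ a ∈ s, ContDiffOn ℝ t (h a) U) (i : Fin 2) :
    Set.EqOn ((pd i)^[t] fun x => ∑ a ∈ s, h a x) (fun x => ∑ a ∈ s, (pd i)^[t] (h a) x) U := by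
  classical
  induction s using Finset.induction with
  | empty =>
    have h0 : pd i (fun _ => 0) = fun _ => 0 := funext fun x => by simp [pd]
    intro x _
    simp only [sum_empty, Function.iterate_fixed h0]
  | insert a s ha ih =>
    intro x hx
    simp only [sum_insert ha]
    rw [iterate_pd_add hU (hh a (mem_insert_self a s))
      (ContDiffOn.sum fun b hb => hh b (mem_insert_of_mem hb)) i hx]
    dsimp only
    rw [ih (fun b hb => hh b (mem_insert_of_mem hb)) hx]

lemma iterate_pd_mul {f g : V2 → ℂ} {t : ℕ} (hU : IsOpen U) (hf : ContDiffOn ℝ t f U)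
    (hg : ContDiffOn ℝ t g U) (i : Fin 2) {x : V2} (hx : x ∈ U) :
    (pd i)^[t] (fun y => f y * g y) x =
      ∑ j ∈ range (t + 1), (t.choose j : ℂ) * ((pd i)^[j] f x * (pd i)^[t - j] g x) := by
  induction t generalizing f g with
  | zero => simp
  | succ t ih =>
    have hf' : ContDiffOn ℝ t f U := hf.of_le (by norm_cast; omega)
    have hg' : ContDiffOn ℝ t g U := hg.of_le (by norm_cast; omega)
    have hpd : Set.EqOn (pd i fun y => f y * g y) (fun y => pd i f y * g y + f y * pd i g y) U :=
      fun y hy => by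
        simp only [pd, fderiv_fun_mul (differentiableAt_of_contDiffOn hU hf hy)
          (differentiableAt_of_contDiffOn hU hg hy), add_apply, smul_apply, smul_eq_mul]
        ring
    rw [Function.iterate_succ_apply, iterate_pd_congr hU hpd i t hx,
      iterate_pd_add hU ((contDiffOn_pd hU hf i).mul hg') (hf'.mul (contDiffOn_pd hU hg i)) i hx]
    dsimp only
    rw [ih (contDiffOn_pd hU hf i) hg', ih hf' (contDiffOn_pd hU hg i),
      Finset.sum_choose_succ_mul (fun j k => (pd i)^[j] f x * (pd i)^[k] g x), add_comm]
    congr 1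
    refine sum_congr rfl fun j hj => ?_
    rw [← Function.iterate_succ_apply, Nat.succ_eq_add_one,
      Nat.sub_add_comm (Nat.lt_succ_iff.mp (mem_range.mp hj))]

lemma mderiv_mul {f g : V2 → ℂ} {β : ℕ × ℕ} (hU : IsOpen U)
    (hf : ContDiffOn ℝ (β.1 + β.2 : ℕ) f U) (hg : ContDiffOn ℝ (β.1 + β.2 : ℕ) g U)
    {x : V2} (hx : x ∈ U) :
    mderiv β (fun y => f y * g y) x =
      ∑ p ∈ range (β.1 + 1) ×ˢ range (β.2 + 1),
        (β.1.choose p.1 * β.2.choose p.2 : ℂ) * (mderiv p f x * mderiv (β - p) g x) := by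
  obtain ⟨b₁, b₂⟩ := β
  have hf₁ : ∀ k ≤ b₂, ContDiffOn ℝ b₁ ((pd 1)^[k] f) U := fun k hk =>
    contDiffOn_iterate_pd hU (hf.of_le (by norm_cast; omega)) 1
  have hg₁ : ∀ k ≤ b₂, ContDiffOn ℝ b₁ ((pd 1)^[b₂ - k] g) U := fun k hk =>
    contDiffOn_iterate_pd hU (hg.of_le (by norm_cast; omega)) 1
  have hinner : Set.EqOn ((pd 1)^[b₂] fun y => f y * g y)
      (fun y => ∑ k ∈ range (b₂ + 1),
        (b₂.choose k : ℂ) * ((pd 1)^[k] f y * (pd 1)^[b₂ - k] g y)) U :=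
    fun y hy => iterate_pd_mul hU (hf.of_le (by norm_cast; omega))
      (hg.of_le (by norm_cast; omega)) 1 hy
  have hterm : ∀ k ∈ range (b₂ + 1), ContDiffOn ℝ b₁
      (fun y => (b₂.choose k : ℂ) * ((pd 1)^[k] f y * (pd 1)^[b₂ - k] g y)) U := fun k hk =>
    contDiffOn_const.mul ((hf₁ k (by simpa [Nat.lt_succ_iff] using hk)).mul
      (hg₁ k (by simpa [Nat.lt_succ_iff] using hk)))
  change (pd 0)^[b₁] ((pd 1)^[b₂] fun y => f y * g y) x = _
  rw [iterate_pd_congr hU hinner 0 b₁ hx, iterate_pd_sum hU hterm 0 hx, sum_product, sum_comm]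
  refine sum_congr rfl fun k hk => ?_
  have hk' : k ≤ b₂ := by simpa [Nat.lt_succ_iff] using hk
  rw [iterate_pd_const_mul hU ((hf₁ k hk').mul (hg₁ k hk')) _ 0 hx]
  dsimp only
  rw [iterate_pd_mul hU (hf₁ k hk') (hg₁ k hk') 0 hx, mul_sum]
  refine sum_congr rfl fun j _ => ?_
  simp only [mderiv, Prod.fst_sub, Prod.snd_sub]
  ring

lemma mderiv_add {f g : V2 → ℂ} {β : ℕ × ℕ} (hU : IsOpen U)
    (hf : ContDiffOn ℝ (β.1 + β.2 : ℕ) f U) (hg : ContDiffOn ℝ (β.1 + β.2 : ℕ) g U)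
    {x : V2} (hx : x ∈ U) :
    mderiv β (fun y => f y + g y) x = mderiv β f x + mderiv β g x := by
  have h₁ := iterate_pd_add (t := β.2) hU (hf.of_le (by norm_cast; omega))
    (hg.of_le (by norm_cast; omega)) 1
  rw [mderiv, iterate_pd_congr hU h₁ 0 β.1 hx]
  exact iterate_pd_add hU (contDiffOn_iterate_pd hU hf 1) (contDiffOn_iterate_pd hU hg 1) 0 hx

lemma mderiv_const_add {β : ℕ × ℕ} (hβ : β ≠ 0) (c : ℂ) (f : V2 → ℂ) :
    mderiv β (fun x => c + f x) = mderiv β f := by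
  have hpd : ∀ i, pd i (fun x => c + f x) = pd i f := fun i => funext fun x => by
    simp only [pd, fderiv_const_add]
  obtain ⟨b₁, b₂⟩ := β
  rcases b₂ with _ | b₂
  · obtain ⟨b₁, rfl⟩ := Nat.exists_eq_succ_of_ne_zero (by simpa using hβ)
    simp only [mderiv, Function.iterate_zero_apply, Function.iterate_succ_apply, hpd]
  · simp only [mderiv, Function.iterate_succ_apply, hpd]

lemma mderiv_zero (f : V2 → ℂ) : mderiv 0 f = f := rfl

end Leibniz

lemma sum_choose_mul_choose (b₁ b₂ : ℕ) :
    ∑ p ∈ range (b₁ + 1) ×ˢ range (b₂ + 1), (b₁.choose p.1 * b₂.choose p.2 : ℝ) =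
      2 ^ (b₁ + b₂) := by
  simp only [sum_product, ← sum_mul_sum]
  exact_mod_cast by rw [Nat.sum_range_choose, Nat.sum_range_choose, pow_add]

lemma mem_range_prod_range_iff {p β : ℕ × ℕ} :
    p ∈ range (β.1 + 1) ×ˢ range (β.2 + 1) ↔ p ≤ β := by
  simp only [mem_product, mem_range, Nat.lt_succ_iff, Prod.le_def]

def DerivBoundedOn (n : ℕ) (δ M : ℝ) (f : V2 → ℂ) (U : Set V2) : Prop :=
  ∀ x ∈ U, ∀ β : ℕ × ℕ, β.1 + β.2 ≤ n → ‖mderiv β f x‖ ≤ M / δ ^ (β.1 + β.2)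

namespace DerivBoundedOn

variable {n m : ℕ} {δ M M' : ℝ} {f g : V2 → ℂ} {U : Set V2}

lemma mono (h : DerivBoundedOn n δ M f U) (hmn : m ≤ n) (hM : M ≤ M') (hδ : 0 < δ) :
    DerivBoundedOn m δ M' f U := fun x hx β hβ =>
  (h x hx β (hβ.trans hmn)).trans (div_le_div_of_nonneg_right hM (by positivity))

lemma norm_le (h : DerivBoundedOn n δ M f U) {x : V2} (hx : x ∈ U) : ‖f x‖ ≤ M := by
  simpa [mderiv_zero] using h x hx 0 (Nat.zero_le n)

lemma of_norm_le (h : ∀ x ∈ U, ‖f x‖ ≤ M) : DerivBoundedOn 0 δ M f U := by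
  rintro x hx ⟨b₁, b₂⟩ hβ
  obtain ⟨rfl, rfl⟩ : b₁ = 0 ∧ b₂ = 0 := by simp only at hβ; omega
  rw [Prod.mk_zero_zero, mderiv_zero]
  simpa using h x hx

lemma succ (h : DerivBoundedOn n δ M f U)
    (htop : ∀ x ∈ U, ∀ β : ℕ × ℕ, β.1 + β.2 = n + 1 → ‖mderiv β f x‖ ≤ M / δ ^ (n + 1)) :
    DerivBoundedOn (n + 1) δ M f U := by
  intro x hx β hβ
  rcases hβ.lt_or_eq with hlt | heq
  · exact h x hx β (Nat.lt_succ_iff.mp hlt)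
  · rw [heq]
    exact htop x hx β heq

lemma add (hU : IsOpen U) (hf : ContDiffOn ℝ n f U) (hg : ContDiffOn ℝ n g U)
    (hfb : DerivBoundedOn n δ M f U) (hgb : DerivBoundedOn n δ M' g U) :
    DerivBoundedOn n δ (M + M') (fun x => f x + g x) U := fun x hx β hβ => by
  rw [mderiv_add hU (hf.of_le (by exact_mod_cast hβ)) (hg.of_le (by exact_mod_cast hβ)) hx,
    add_div]
  exact (norm_add_le _ _).trans (add_le_add (hfb x hx β hβ) (hgb x hx β hβ))

end DerivBoundedOn

section Remainder

variable {U : Set V2}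

/-- Apart from its two extreme terms, the Leibniz expansion of `∂^β (f g)` only involves
derivatives of orders below `|β|`. -/
lemma norm_mderiv_mul_sub_le {f g : V2 → ℂ} {n : ℕ} {δ a b : ℝ} (hU : IsOpen U)
    (hf : ContDiffOn ℝ (n + 1 : ℕ) f U) (hg : ContDiffOn ℝ (n + 1 : ℕ) g U) (hδ : 0 < δ)
    (hfb : DerivBoundedOn n δ a f U) (hgb : DerivBoundedOn n δ b g U) {x : V2} (hx : x ∈ U)
    {β : ℕ × ℕ} (hβ : β.1 + β.2 = n + 1) :
    ‖mderiv β (fun y => f y * g y) x - mderiv β f x * g x - f x * mderiv β g x‖ ≤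
      2 ^ (n + 1) * (a * b) / δ ^ (n + 1) := by
  rw [← hβ] at hf hg ⊢
  have ha : 0 ≤ a := (norm_nonneg _).trans (hfb.norm_le hx)
  have hb : 0 ≤ b := (norm_nonneg _).trans (hgb.norm_le hx)
  set s := range (β.1 + 1) ×ˢ range (β.2 + 1)
  set c : ℕ × ℕ → ℝ := fun p => β.1.choose p.1 * β.2.choose p.2
  set t : ℕ × ℕ → ℂ := fun p =>
    (β.1.choose p.1 * β.2.choose p.2 : ℂ) * (mderiv p f x * mderiv (β - p) g x)
  have h0 : (0 : ℕ × ℕ) ∈ s := mem_range_prod_range_iff.mpr ⟨Nat.zero_le _, Nat.zero_le _⟩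
  have hβs : β ∈ s.erase 0 := mem_erase.mpr
    ⟨fun h => by simp [h] at hβ, mem_range_prod_range_iff.mpr le_rfl⟩
  have hsplit : mderiv β (fun y => f y * g y) x - mderiv β f x * g x - f x * mderiv β g x =
      ∑ p ∈ (s.erase 0).erase β, t p := by
    rw [mderiv_mul hU hf hg hx, ← add_sum_erase s t h0, ← add_sum_erase _ t hβs]
    simp only [t, Prod.fst_zero, Prod.snd_zero, Nat.choose_zero_right, Nat.choose_self,
      Nat.cast_one, one_mul, tsub_zero, tsub_self, mderiv_zero]
    ring
  have hterm : ∀ p ∈ (s.erase 0).erase β, ‖t p‖ ≤ c p * (a * b / δ ^ (β.1 + β.2)) := by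
    intro p hp
    obtain ⟨hpβ, hp0, hps⟩ : p ≠ β ∧ p ≠ 0 ∧ p ∈ s := by simpa using hp
    obtain ⟨hp₁, hp₂⟩ : p.1 ≤ β.1 ∧ p.2 ≤ β.2 := mem_range_prod_range_iff.mp hps
    have hpβ' : p.1 + p.2 < β.1 + β.2 := by
      by_contra! h
      exact hpβ (Prod.ext (by omega) (by omega))
    have hp0' : 0 < p.1 + p.2 := by
      by_contra! h
      exact hp0 (Prod.ext (by simp only [Prod.fst_zero]; omega)
        (by simp only [Prod.snd_zero]; omega))
    have hf' := hfb x hx p (by omega)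
    have hg' := hgb x hx (β - p) (by simp only [Prod.fst_sub, Prod.snd_sub]; omega)
    have horder : p.1 + p.2 + ((β - p).1 + (β - p).2) = β.1 + β.2 := by
      simp only [Prod.fst_sub, Prod.snd_sub]; omega
    calc ‖t p‖ = c p * (‖mderiv p f x‖ * ‖mderiv (β - p) g x‖) := by simp [t, c]
      _ ≤ c p * (a / δ ^ (p.1 + p.2) * (b / δ ^ ((β - p).1 + (β - p).2))) := by gcongr
      _ = c p * (a * b / δ ^ (β.1 + β.2)) := by rw [div_mul_div_comm, ← pow_add, horder]
  calc _ = ‖∑ p ∈ (s.erase 0).erase β, t p‖ := by rw [hsplit]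
    _ ≤ ∑ p ∈ (s.erase 0).erase β, c p * (a * b / δ ^ (β.1 + β.2)) :=
        (norm_sum_le _ _).trans (sum_le_sum hterm)
    _ ≤ ∑ p ∈ s, c p * (a * b / δ ^ (β.1 + β.2)) :=
        sum_le_sum_of_subset_of_nonneg ((erase_subset _ _).trans (erase_subset _ _))
          fun _ _ _ => by positivity
    _ = 2 ^ (β.1 + β.2) * (a * b) / δ ^ (β.1 + β.2) := by
        rw [← sum_mul, sum_choose_mul_choose]
        ring

end Remainder

lemma cpow_half_mul_self (z : ℂ) : z ^ (1 / 2 : ℂ) * z ^ (1 / 2 : ℂ) = z := by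
  have h := Complex.cpow_nat_inv_pow z (two_ne_zero (α := ℕ))
  rwa [Nat.cast_ofNat, ← one_div, sq] at h

lemma re_cpow_half_nonneg (z : ℂ) : 0 ≤ (z ^ (1 / 2 : ℂ)).re := by
  rcases eq_or_ne z 0 with rfl | hz
  · simp
  rw [Complex.cpow_def_of_ne_zero hz, Complex.exp_re]
  refine mul_nonneg (Real.exp_pos _).le (Real.cos_nonneg_of_neg_pi_div_two_le_of_le ?_ ?_) <;>
  · have h₁ := Complex.neg_pi_lt_arg z
    have h₂ := Complex.arg_le_pi z
    simp only [Complex.mul_im, Complex.log_re, Complex.log_im]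
    norm_num
    linarith

/-- `Re z = (Re √z)² - (Im √z)²` and `Re √z ≥ 0`. -/
lemma half_le_re_cpow_half {z : ℂ} (hz : 1 / 4 ≤ z.re) : 1 / 2 ≤ (z ^ (1 / 2 : ℂ)).re := by
  have hsq : z.re = (z ^ (1 / 2 : ℂ)).re ^ 2 - (z ^ (1 / 2 : ℂ)).im ^ 2 := by
    conv_lhs => rw [← cpow_half_mul_self z]
    rw [Complex.mul_re]
    ring
  nlinarith [re_cpow_half_nonneg z, sq_nonneg (z ^ (1 / 2 : ℂ)).im]

lemma norm_cpow_half_le {z : ℂ} (hz : ‖z‖ ≤ 4) : ‖z ^ (1 / 2 : ℂ)‖ ≤ 2 := by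
  have hsq : ‖z ^ (1 / 2 : ℂ)‖ * ‖z ^ (1 / 2 : ℂ)‖ = ‖z‖ := by
    rw [← norm_mul, cpow_half_mul_self]
  nlinarith [norm_nonneg (z ^ (1 / 2 : ℂ))]

lemma contDiffOn_cpow_half {n : WithTop ℕ∞} :
    ContDiffOn ℝ n (fun z : ℂ => z ^ (1 / 2 : ℂ)) {z | 0 < z.re} := by
  have hd : DifferentiableOn ℂ (fun z : ℂ => z ^ (1 / 2 : ℂ)) {z | 0 < z.re} := fun z hz =>
    (differentiableAt_id.cpow_const (Or.inl hz)).differentiableWithinAt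
  exact ((hd.analyticOnNhd (isOpen_lt continuous_const Complex.continuous_re)
    ).contDiffOn_of_completeSpace).restrict_scalars ℝ

def sqrtOnePlus (F : V2 → ℂ) (x : V2) : ℂ := (1 + F x) ^ (1 / 2 : ℂ)

lemma sqrtOnePlus_mul_self (F : V2 → ℂ) (x : V2) :
    sqrtOnePlus F x * sqrtOnePlus F x = 1 + F x :=
  cpow_half_mul_self _

lemma sqrtOnePlus_sub_mul_add (F F₀ : V2 → ℂ) (x : V2) :
    (sqrtOnePlus F x - sqrtOnePlus F₀ x) * (sqrtOnePlus F x + sqrtOnePlus F₀ x) = F x - F₀ x := by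
  linear_combination sqrtOnePlus_mul_self F x - sqrtOnePlus_mul_self F₀ x

section SqrtOnePlus

variable {F F₀ : V2 → ℂ} {x : V2}

lemma nine_div_ten_le_re_one_add {w : ℂ} (hw : ‖w‖ ≤ 1 / 10) : 9 / 10 ≤ (1 + w).re := by
  have := neg_le_of_abs_le ((Complex.abs_re_le_norm w).trans hw)
  simp only [Complex.add_re, Complex.one_re]
  linarith

lemma half_le_re_sqrtOnePlus (hF : ‖F x‖ ≤ 1 / 10) : 1 / 2 ≤ (sqrtOnePlus F x).re :=
  half_le_re_cpow_half (by linarith [nine_div_ten_le_re_one_add hF])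

lemma one_le_norm_sqrtOnePlus_add (hF : ‖F x‖ ≤ 1 / 10) (hF₀ : ‖F₀ x‖ ≤ 1 / 10) :
    1 ≤ ‖sqrtOnePlus F x + sqrtOnePlus F₀ x‖ :=
  le_trans (by linarith [Complex.add_re (sqrtOnePlus F x) (sqrtOnePlus F₀ x),
    half_le_re_sqrtOnePlus hF, half_le_re_sqrtOnePlus hF₀]) (Complex.re_le_norm _)

lemma norm_sqrtOnePlus_le (hF : ‖F x‖ ≤ 1 / 10) : ‖sqrtOnePlus F x‖ ≤ 2 :=
  norm_cpow_half_le <| (norm_add_le _ _).trans <| by rw [norm_one]; linarith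

lemma ContDiffOn.sqrtOnePlus {n : ℕ} {U : Set V2} (hF : ContDiffOn ℝ n F U)
    (hsmall : ∀ x ∈ U, ‖F x‖ ≤ 1 / 10) : ContDiffOn ℝ n (sqrtOnePlus F) U :=
  contDiffOn_cpow_half.comp (contDiffOn_const.add hF) fun x hx =>
    (by norm_num : (0 : ℝ) < 9 / 10).trans_le (nine_div_ten_le_re_one_add (hsmall x hx))

end SqrtOnePlus

lemma norm_le_of_norm_sub_mul_le {g y h : ℂ} {r : ℝ} (hg : 1 ≤ ‖g‖) (hr : ‖h - g * y‖ ≤ r) :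
    ‖y‖ ≤ ‖h‖ + r :=
  calc ‖y‖ ≤ ‖g‖ * ‖y‖ := le_mul_of_one_le_left (norm_nonneg y) hg
    _ = ‖h - (h - g * y)‖ := by rw [sub_sub_cancel, norm_mul]
    _ ≤ ‖h‖ + r := (norm_sub_le _ _).trans (by linarith)

section Induction

variable {n : ℕ} {U : Set V2} {δ η A C₁ C₂ : ℝ} {F F₀ : V2 → ℂ}

lemma DerivBoundedOn.sqrtOnePlus_succ (hU : IsOpen U) (hδ : 0 < δ)
    (hF : ContDiffOn ℝ (n + 1 : ℕ) F U) (hsmall : ∀ x ∈ U, ‖F x‖ ≤ 1 / 10)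
    (hFb : DerivBoundedOn (n + 1) δ A F U) (hS : DerivBoundedOn n δ C₁ (sqrtOnePlus F) U) :
    DerivBoundedOn (n + 1) δ (max C₁ (A + 2 ^ (n + 1) * (C₁ * C₁))) (sqrtOnePlus F) U := by
  refine (hS.mono le_rfl (le_max_left _ _) hδ).succ fun x hx β hβ => ?_
  have hSS := hF.sqrtOnePlus hsmall
  have hsq : mderiv β (fun y => sqrtOnePlus F y * sqrtOnePlus F y) x = mderiv β F x := by
    rw [mderiv_congr hU (fun y _ => sqrtOnePlus_mul_self F y) β hx,
      mderiv_const_add (fun h => by simp [h] at hβ)]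
  have hrem := norm_mderiv_mul_sub_le hU hSS hSS hδ hS hS hx hβ
  rw [hsq] at hrem
  have hrem' : ‖mderiv β F x - (sqrtOnePlus F x + sqrtOnePlus F x) * mderiv β (sqrtOnePlus F) x‖ ≤
      2 ^ (n + 1) * (C₁ * C₁) / δ ^ (n + 1) := by
    convert hrem using 2
    ring
  have hdiv := norm_le_of_norm_sub_mul_le
    (one_le_norm_sqrtOnePlus_add (hsmall x hx) (hsmall x hx)) hrem'
  calc ‖mderiv β (sqrtOnePlus F) x‖
      ≤ A / δ ^ (n + 1) + 2 ^ (n + 1) * (C₁ * C₁) / δ ^ (n + 1) :=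
        hdiv.trans (add_le_add_left (by simpa [hβ] using hFb x hx β hβ.le) _)
    _ ≤ max C₁ (A + 2 ^ (n + 1) * (C₁ * C₁)) / δ ^ (n + 1) := by
        rw [← add_div]
        exact div_le_div_of_nonneg_right (le_max_right _ _) (by positivity)

lemma DerivBoundedOn.sqrtOnePlus_sub_succ (hU : IsOpen U) (hδ : 0 < δ) (hη : 0 ≤ η)
    (hF : ContDiffOn ℝ (n + 1 : ℕ) F U) (hF₀ : ContDiffOn ℝ (n + 1 : ℕ) F₀ U)
    (hsmall : ∀ x ∈ U, ‖F x‖ ≤ 1 / 10) (hsmall₀ : ∀ x ∈ U, ‖F₀ x‖ ≤ 1 / 10)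
    (hD : DerivBoundedOn (n + 1) δ η (fun x => F x - F₀ x) U)
    (hS : DerivBoundedOn (n + 1) δ C₂ (sqrtOnePlus F) U)
    (hS₀ : DerivBoundedOn (n + 1) δ C₂ (sqrtOnePlus F₀) U)
    (hDS : DerivBoundedOn n δ (C₁ * η) (fun x => sqrtOnePlus F x - sqrtOnePlus F₀ x) U) :
    DerivBoundedOn (n + 1) δ (max C₁ (1 + (2 ^ (n + 1) + 1) * (C₁ * (C₂ + C₂))) * η)
      (fun x => sqrtOnePlus F x - sqrtOnePlus F₀ x) U := by
  refine (hDS.mono le_rfl (mul_le_mul_of_nonneg_right (le_max_left _ _) hη) hδ).succ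
    fun x hx β hβ => ?_
  have hSF := hF.sqrtOnePlus hsmall
  have hSF₀ := hF₀.sqrtOnePlus hsmall₀
  set D : V2 → ℂ := fun y => sqrtOnePlus F y - sqrtOnePlus F₀ y
  set G : V2 → ℂ := fun y => sqrtOnePlus F y + sqrtOnePlus F₀ y
  have hG : DerivBoundedOn (n + 1) δ (C₂ + C₂) G U := hS.add hU hSF hSF₀ hS₀
  have hrem := norm_mderiv_mul_sub_le hU (hSF.sub hSF₀) (hSF.add hSF₀) hδ hDS
    (hG.mono (Nat.le_succ n) le_rfl hδ) hx hβ
  rw [mderiv_congr hU (fun y _ => sqrtOnePlus_sub_mul_add F F₀ y) β hx] at hrem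
  have hDG : ‖D x * mderiv β G x‖ ≤ C₁ * η * ((C₂ + C₂) / δ ^ (n + 1)) :=
    norm_mul_le_of_le (hDS.norm_le hx) (by simpa [hβ] using hG x hx β hβ.le)
  have hrem' : ‖mderiv β (fun y => F y - F₀ y) x - G x * mderiv β D x‖ ≤
      2 ^ (n + 1) * (C₁ * η * (C₂ + C₂)) / δ ^ (n + 1) + C₁ * η * ((C₂ + C₂) / δ ^ (n + 1)) :=
    calc _ = ‖(mderiv β (fun y => F y - F₀ y) x - mderiv β D x * G x - D x * mderiv β G x) +
          D x * mderiv β G x‖ := by ring_nf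
      _ ≤ _ := (norm_add_le _ _).trans (add_le_add hrem hDG)
  have hdiv := norm_le_of_norm_sub_mul_le
    (one_le_norm_sqrtOnePlus_add (hsmall x hx) (hsmall₀ x hx)) hrem'
  calc ‖mderiv β D x‖
      ≤ η / δ ^ (n + 1) + (2 ^ (n + 1) * (C₁ * η * (C₂ + C₂)) / δ ^ (n + 1) +
          C₁ * η * ((C₂ + C₂) / δ ^ (n + 1))) :=
        hdiv.trans (add_le_add_left (by simpa [hβ] using hD x hx β hβ.le) _)
    _ = (1 + (2 ^ (n + 1) + 1) * (C₁ * (C₂ + C₂))) * η / δ ^ (n + 1) := by ring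
    _ ≤ max C₁ (1 + (2 ^ (n + 1) + 1) * (C₁ * (C₂ + C₂))) * η / δ ^ (n + 1) := by
        gcongr
        exact le_max_right _ _

end Induction

theorem exists_derivBoundedOn_sqrtOnePlus (n : ℕ) (A : ℝ) :
    ∃ C : ℝ, ∀ U : Set V2, IsOpen U → ∀ δ : ℝ, 0 < δ → ∀ F : V2 → ℂ, ContDiffOn ℝ n F U →
      (∀ x ∈ U, ‖F x‖ ≤ 1 / 10) → DerivBoundedOn n δ A F U →
      DerivBoundedOn n δ C (sqrtOnePlus F) U := by
  induction n with
  | zero => exact ⟨2, fun U _ δ _ F _ hsmall _ =>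
      DerivBoundedOn.of_norm_le fun x hx => norm_sqrtOnePlus_le (hsmall x hx)⟩
  | succ n ih =>
    obtain ⟨C, hC⟩ := ih
    exact ⟨_, fun U hU δ hδ F hF hsmall hFb =>
      DerivBoundedOn.sqrtOnePlus_succ hU hδ hF hsmall hFb (hC U hU δ hδ F
        (hF.of_le (by norm_cast; omega)) hsmall (hFb.mono n.le_succ le_rfl hδ))⟩

theorem exists_derivBoundedOn_sqrtOnePlus_sub (n : ℕ) (A : ℝ) :
    ∃ C : ℝ, 0 < C ∧ ∀ U : Set V2, IsOpen U → ∀ δ η : ℝ, 0 < δ → 0 ≤ η →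
      ∀ F F₀ : V2 → ℂ, ContDiffOn ℝ n F U → ContDiffOn ℝ n F₀ U →
      (∀ x ∈ U, ‖F x‖ ≤ 1 / 10) → (∀ x ∈ U, ‖F₀ x‖ ≤ 1 / 10) →
      DerivBoundedOn n δ A F U → DerivBoundedOn n δ A F₀ U →
      DerivBoundedOn n δ η (fun x => F x - F₀ x) U →
      DerivBoundedOn n δ (C * η) (fun x => sqrtOnePlus F x - sqrtOnePlus F₀ x) U := by
  induction n with
  | zero =>
    refine ⟨1, one_pos, fun U _ δ η _ _ F F₀ _ _ hsmall hsmall₀ _ _ hD => ?_⟩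
    refine DerivBoundedOn.of_norm_le fun x hx => ?_
    have h := norm_le_of_norm_sub_mul_le (r := 0)
      (one_le_norm_sqrtOnePlus_add (hsmall x hx) (hsmall₀ x hx))
      (by rw [mul_comm, sqrtOnePlus_sub_mul_add, sub_self, norm_zero])
    linarith [hD.norm_le hx]
  | succ n ih =>
    obtain ⟨C₁, hC₁, h₁⟩ := ih
    obtain ⟨C₂, h₂⟩ := exists_derivBoundedOn_sqrtOnePlus (n + 1) A
    refine ⟨max C₁ (1 + (2 ^ (n + 1) + 1) * (C₁ * (C₂ + C₂))), lt_max_of_lt_left hC₁,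
      fun U hU δ η hδ hη F F₀ hF hF₀ hsmall hsmall₀ hFb hF₀b hD => ?_⟩
    have hle : ((n : ℕ) : WithTop ℕ∞) ≤ (n + 1 : ℕ) := by norm_cast; omega
    exact DerivBoundedOn.sqrtOnePlus_sub_succ hU hδ hη hF hF₀ hsmall hsmall₀ hD
      (h₂ U hU δ hδ F hF hsmall hFb) (h₂ U hU δ hδ F₀ hF₀ hsmall₀ hF₀b)
      (h₁ U hU δ η hδ hη F F₀ (hF.of_le hle) (hF₀.of_le hle) hsmall hsmall₀
        (hFb.mono n.le_succ le_rfl hδ) (hF₀b.mono n.le_succ le_rfl hδ)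
        (hD.mono n.le_succ le_rfl hδ))

theorem statement18_general (βmax : ℕ) (A : ℝ) :
    ∃ C : ℝ, 0 < C ∧
      ∀ U : Set V2, IsOpen U → ∀ δ η : ℝ, 0 < δ → 0 < η →
      ∀ F F₀ : V2 → ℂ, ContDiffOn ℝ βmax F U → ContDiffOn ℝ βmax F₀ U →
      (∀ κ ∈ U, ‖F κ‖ ≤ 1/10) → (∀ κ ∈ U, ‖F₀ κ‖ ≤ 1/10) →
      (∀ κ ∈ U, ∀ β : ℕ × ℕ, β.1 + β.2 ≤ βmax →
        ‖mderiv β F κ‖ ≤ A / δ ^ (β.1 + β.2)) →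
      (∀ κ ∈ U, ∀ β : ℕ × ℕ, β.1 + β.2 ≤ βmax →
        ‖mderiv β F₀ κ‖ ≤ A / δ ^ (β.1 + β.2)) →
      (∀ κ ∈ U, ∀ β : ℕ × ℕ, β.1 + β.2 ≤ βmax →
        ‖mderiv β (fun x => F x - F₀ x) κ‖ ≤ η / δ ^ (β.1 + β.2)) →
      ∀ κ ∈ U, ∀ β : ℕ × ℕ, β.1 + β.2 ≤ βmax →
        ‖mderiv β (fun x => (1 + F x) ^ ((1 : ℂ)/2) - (1 + F₀ x) ^ ((1 : ℂ)/2)) κ‖ ≤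
          C * η / δ ^ (β.1 + β.2) := by
  obtain ⟨C, hC, h⟩ := exists_derivBoundedOn_sqrtOnePlus_sub βmax A
  exact ⟨C, hC, fun U hU δ η hδ hη F F₀ hF hF₀ hsmall hsmall₀ hFb hF₀b hD =>
    h U hU δ η hδ hη.le F F₀ hF hF₀ hsmall hsmall₀ hFb hF₀b hD⟩

/-- (Bookkeeping Lemma.)  Stability of the principal square root
`(1 + F)^{1/2}` under multi-index derivative bounds. -/
theorem statement18 (βmax : ℕ) (hβ : 0 < βmax) (A : ℝ) (hA : 0 < A) :
    ∃ C : ℝ, 0 < C ∧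
      ∀ U : Set V2, IsOpen U → ∀ δ η : ℝ, 0 < δ → 0 < η →
      ∀ F F₀ : V2 → ℂ, ContDiffOn ℝ βmax F U → ContDiffOn ℝ βmax F₀ U →
      (∀ κ ∈ U, ‖F κ‖ ≤ 1/10) → (∀ κ ∈ U, ‖F₀ κ‖ ≤ 1/10) →
      (∀ κ ∈ U, ∀ β : ℕ × ℕ, β.1 + β.2 ≤ βmax →
        ‖mderiv β F κ‖ ≤ A / δ ^ (β.1 + β.2)) →
      (∀ κ ∈ U, ∀ β : ℕ × ℕ, β.1 + β.2 ≤ βmax →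
        ‖mderiv β F₀ κ‖ ≤ A / δ ^ (β.1 + β.2)) →
      (∀ κ ∈ U, ∀ β : ℕ × ℕ, β.1 + β.2 ≤ βmax →
        ‖mderiv β (fun x => F x - F₀ x) κ‖ ≤ η / δ ^ (β.1 + β.2)) →
      ∀ κ ∈ U, ∀ β : ℕ × ℕ, β.1 + β.2 ≤ βmax →
        ‖mderiv β (fun x => (1 + F x) ^ ((1 : ℂ)/2) - (1 + F₀ x) ^ ((1 : ℂ)/2)) κ‖ ≤
          C * η / δ ^ (β.1 + β.2) :=
  statement18_general βmax A
end
end
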